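/- arXiv:1911.07268 — 8 statements merged into one kernel-verified Lean document; each statement's English description precedes it below -/
import Mathlib

section
/- For any scaled Lorentz transformation A (i.e. A = s·B for some nonzero real s and Lorentz transformation B), there exists a unique tuple (s, v, O, ε₁, ε₂) with s > 0, v ∈ ℝ³ with |v| < 1, O ∈ SO(3,ℝ), and ε₁, ε₂ ∈ {−1, 1}, such that, setting γ = 1/√(1 − |v|²), A equals s times the 4×4 block matrix whose top-left 1×1 block is ε₁γ, top-right 1×3 block is ε₁γ·vᵀO, bottom-left 3×1 block is ε₂γ·v, and bottom-right 3×3 block is ε₂·(I₃ + (γ²/(1+γ))·v vᵀ)·O. -/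
/-- The Minkowski quadratic form on ℝ⁴: q(t,x,y,z) = x² + y² + z² − t². -/
def mink (x : Fin 4 → ℝ) : ℝ := (x 1)^2 + (x 2)^2 + (x 3)^2 - (x 0)^2

/-- A real 4×4 matrix is a Lorentz transformation if it preserves the Minkowski form. -/
def IsLorentz (A : Matrix (Fin 4) (Fin 4) ℝ) : Prop :=
  ∀ x : Fin 4 → ℝ, mink (A.mulVec x) = mink x

/-- A scaled Lorentz transformation: a nonzero multiple of a Lorentz transformation. -/
def IsScaledLorentz (A : Matrix (Fin 4) (Fin 4) ℝ) : Prop :=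
  ∃ s : ℝ, s ≠ 0 ∧ ∃ B : Matrix (Fin 4) (Fin 4) ℝ, IsLorentz B ∧ A = s • B

/-- Membership in SO(3,ℝ). -/
def SO3 (O : Matrix (Fin 3) (Fin 3) ℝ) : Prop := O.transpose * O = 1 ∧ O.det = 1

/-- Squared Euclidean norm of a vector in ℝ³. -/
def sq3 (v : Fin 3 → ℝ) : ℝ := (v 0)^2 + (v 1)^2 + (v 2)^2

/-- The Lorentz factor γ = 1/√(1 − |v|²). -/
noncomputable def gam (v : Fin 3 → ℝ) : ℝ := 1 / Real.sqrt (1 - sq3 v)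

/-- Build a 4×4 matrix from blocks of sizes 1 and 3. -/
def blk4 (a : Matrix (Fin 1) (Fin 1) ℝ) (b : Matrix (Fin 1) (Fin 3) ℝ)
    (c : Matrix (Fin 3) (Fin 1) ℝ) (d : Matrix (Fin 3) (Fin 3) ℝ) :
    Matrix (Fin 4) (Fin 4) ℝ :=
  Matrix.reindex finSumFinEquiv finSumFinEquiv (Matrix.fromBlocks a b c d)

/-- The 4×4 matrix with top-left block ε₁γ, top-right block ε₁γ·vᵀO,
bottom-left block ε₂γ·v, and bottom-right block ε₂·(I₃ + (γ²/(1+γ))·v vᵀ)·O. -/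
noncomputable def lorentzForm (e1 e2 : ℝ) (v : Fin 3 → ℝ) (O : Matrix (Fin 3) (Fin 3) ℝ) :
    Matrix (Fin 4) (Fin 4) ℝ :=
  blk4 (Matrix.of fun _ _ => e1 * gam v)
       (Matrix.of fun _ j => e1 * gam v * Matrix.vecMul v O j)
       (Matrix.of fun i _ => e2 * gam v * v i)
       (e2 • ((1 + (gam v ^ 2 / (1 + gam v)) • Matrix.vecMulVec v v) * O))

/-!
With `η = diag(−1, 1, 1, 1)`, a Lorentz transformation `B` satisfies `Bᵀ η B = η` and
`B η Bᵀ = η`. Its first column `(α, u)` satisfies `α² = 1 + |u|²`, so `γ = |α|`, `ε₁ = sign α`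
and `v = u / γ`. With `d` the spatial block and `P(v)` the spatial block of the boost,
`O := P(v)⁻¹ d` is orthogonal because `d dᵀ = I + u uᵀ = P(v)²`, and the top row is then forced
by `(Bᵀ η B)₀ⱼ = 0`. Replacing `(ε₂, v, O)` by `(−ε₂, −v, −O)` does not change the matrix and
flips `det O`, which makes `O ∈ SO(3)`.

For uniqueness, the first column of `s · L` has Minkowski square `−s²`, which determines `s`;
the `(0,0)` entry `ε₁γ` determines `γ` and `ε₁`, the determinant `ε₂³γ det O` of the spatial
block determines `ε₂`, the first column then gives `v`, and cancelling `P(v)` gives `O`.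
-/

open Matrix

namespace Matrix

variable {n : Type*} [DecidableEq n]

theorem transpose_one_add_smul_vecMulVec (v : n → ℝ) (r : ℝ) :
    (1 + r • vecMulVec v v)ᵀ = 1 + r • vecMulVec v v := by
  rw [transpose_add, transpose_one, transpose_smul, transpose_vecMulVec]

variable [Fintype n]

theorem one_add_smul_vecMulVec_mul_one_add_smul_vecMulVec (v : n → ℝ) (a b : ℝ) :
    (1 + a • vecMulVec v v) * (1 + b • vecMulVec v v) =
      1 + (a + b + a * b * (v ⬝ᵥ v)) • vecMulVec v v := by
  simp only [add_mul, mul_add, one_mul, mul_one, smul_mul_smul_comm, vecMulVec_mul_vecMulVec,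
    vecMulVec_smul]
  module

theorem det_one_add_smul_vecMulVec (v : n → ℝ) (r : ℝ) :
    (1 + r • vecMulVec v v).det = 1 + r * (v ⬝ᵥ v) := by
  rw [← vecMulVec_smul, vecMulVec_eq Unit, det_one_add_replicateCol_mul_replicateRow,
    smul_dotProduct, smul_eq_mul]

theorem vecMul_one_add_smul_vecMulVec (v : n → ℝ) (r : ℝ) :
    v ᵥ* (1 + r • vecMulVec v v) = (1 + r * (v ⬝ᵥ v)) • v := by
  rw [vecMul_add, vecMul_one, vecMul_smul, vecMul_vecMulVec, smul_smul]
  module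

theorem IsSymm.toMatrix'_toQuadraticForm' {M : Matrix n n ℝ} (hM : M.IsSymm) :
    M.toQuadraticForm'.toMatrix' = M := by
  rw [QuadraticForm.toMatrix', toQuadraticForm', QuadraticMap.associated_left_inverse,
    LinearMap.toMatrix'_toLinearMap₂']
  intro x y
  rw [toLinearMap₂'_apply', toLinearMap₂'_apply', dotProduct_mulVec, ← mulVec_transpose, hM.eq,
    dotProduct_comm]

end Matrix

lemma sq3_eq_dotProduct (v : Fin 3 → ℝ) : sq3 v = v ⬝ᵥ v := by
  simp [sq3, dotProduct, Fin.sum_univ_three, sq]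

lemma sq3_nonneg (v : Fin 3 → ℝ) : 0 ≤ sq3 v := by
  unfold sq3
  positivity

lemma sqrt_sq3_lt_one_iff {v : Fin 3 → ℝ} : √(sq3 v) < 1 ↔ sq3 v < 1 := by
  rw [Real.sqrt_lt' one_pos, one_pow]

lemma sq3_smul (r : ℝ) (v : Fin 3 → ℝ) : sq3 (r • v) = r ^ 2 * sq3 v := by
  simp only [sq3, Pi.smul_apply, smul_eq_mul]
  ring

lemma sq3_neg (v : Fin 3 → ℝ) : sq3 (-v) = sq3 v := by
  simpa using sq3_smul (-1) v

lemma gam_neg (v : Fin 3 → ℝ) : gam (-v) = gam v := by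
  rw [gam, gam, sq3_neg]

section LorentzFactor

variable {v : Fin 3 → ℝ} (hv : sq3 v < 1)
include hv

lemma gam_pos : 0 < gam v := by
  unfold gam
  have := Real.sqrt_pos.2 (sub_pos.2 hv)
  positivity

lemma gam_sq_mul_one_sub_sq3 : gam v ^ 2 * (1 - sq3 v) = 1 := by
  rw [gam, div_pow, one_pow, Real.sq_sqrt (sub_pos.2 hv).le, one_div_mul_cancel (sub_pos.2 hv).ne']

lemma gam_sq_div_mul_sq3 : gam v ^ 2 / (1 + gam v) * sq3 v = gam v - 1 := by
  have h := gam_sq_mul_one_sub_sq3 hv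
  have := gam_pos hv
  field_simp
  linear_combination -h

end LorentzFactor

lemma gam_inv_smul {g : ℝ} {u : Fin 3 → ℝ} (hg : 0 < g) (hgu : g ^ 2 = 1 + sq3 u) :
    sq3 (g⁻¹ • u) < 1 ∧ gam (g⁻¹ • u) = g := by
  have h : 1 - sq3 (g⁻¹ • u) = (g⁻¹) ^ 2 := by
    rw [sq3_smul, show sq3 u = g ^ 2 - 1 by linarith]
    field_simp
    ring
  refine ⟨by nlinarith [inv_pos.2 hg], ?_⟩
  rw [gam, h, Real.sqrt_sq (inv_pos.2 hg).le, one_div, inv_inv]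

/-- `P(v)`, the spatial block of the pure boost with velocity `v`. -/
noncomputable def spatialBoost (v : Fin 3 → ℝ) : Matrix (Fin 3) (Fin 3) ℝ :=
  1 + (gam v ^ 2 / (1 + gam v)) • vecMulVec v v

lemma transpose_spatialBoost (v : Fin 3 → ℝ) : (spatialBoost v)ᵀ = spatialBoost v :=
  transpose_one_add_smul_vecMulVec v _

section SpatialBoost

variable {v : Fin 3 → ℝ} (hv : sq3 v < 1)
include hv

lemma vecMul_spatialBoost : v ᵥ* spatialBoost v = gam v • v := by
  rw [spatialBoost, vecMul_one_add_smul_vecMulVec, ← sq3_eq_dotProduct, gam_sq_div_mul_sq3 hv,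
    add_sub_cancel]

lemma det_spatialBoost : (spatialBoost v).det = gam v := by
  rw [spatialBoost, det_one_add_smul_vecMulVec, ← sq3_eq_dotProduct, gam_sq_div_mul_sq3 hv,
    add_sub_cancel]

lemma isUnit_det_spatialBoost : IsUnit (spatialBoost v).det := by
  rw [det_spatialBoost hv]
  exact (gam_pos hv).ne'.isUnit

lemma spatialBoost_mul_self :
    spatialBoost v * spatialBoost v = 1 + gam v ^ 2 • vecMulVec v v := by
  rw [spatialBoost, one_add_smul_vecMulVec_mul_one_add_smul_vecMulVec, ← sq3_eq_dotProduct,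
    mul_assoc, gam_sq_div_mul_sq3 hv]
  have := gam_pos hv
  congr 2
  field_simp
  ring

lemma vecMul_spatialBoost_inv : v ᵥ* (spatialBoost v)⁻¹ = (gam v)⁻¹ • v := by
  calc v ᵥ* (spatialBoost v)⁻¹ = ((gam v)⁻¹ • (v ᵥ* spatialBoost v)) ᵥ* (spatialBoost v)⁻¹ := by
        rw [vecMul_spatialBoost hv, inv_smul_smul₀ (gam_pos hv).ne']
    _ = (gam v)⁻¹ • v := by
        rw [smul_vecMul, vecMul_vecMul, mul_nonsing_inv _ (isUnit_det_spatialBoost hv), vecMul_one]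

end SpatialBoost

def minkowskiMetric : Matrix (Fin 4) (Fin 4) ℝ := diagonal ![-1, 1, 1, 1]

local notation "η" => minkowskiMetric

lemma isSymm_minkowskiMetric : IsSymm η :=
  isSymm_diagonal _

lemma minkowskiMetric_mul_self : η * η = 1 := by
  rw [minkowskiMetric, diagonal_mul_diagonal, ← diagonal_one]
  congr 1
  ext i
  fin_cases i <;> norm_num

lemma mink_smul (s : ℝ) (x : Fin 4 → ℝ) : mink (s • x) = s ^ 2 * mink x := by
  simp only [mink, Pi.smul_apply, smul_eq_mul]
  ring

lemma mink_eq_toQuadraticForm' (x : Fin 4 → ℝ) : mink x = toQuadraticForm' η x := by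
  simp [toQuadraticForm', toLinearMap₂'_apply', minkowskiMetric, mink, dotProduct,
    Fin.sum_univ_four, mulVec_diagonal]
  ring

lemma transpose_mul_minkowskiMetric_mul_apply (B : Matrix (Fin 4) (Fin 4) ℝ) (i j : Fin 4) :
    (Bᵀ * η * B) i j =
      -(B 0 i * B 0 j) + (fun k : Fin 3 => B k.succ i) ⬝ᵥ fun k => B k.succ j := by
  simp [minkowskiMetric, mul_apply, dotProduct, Fin.sum_univ_succ]

lemma mul_minkowskiMetric_mul_transpose_apply (B : Matrix (Fin 4) (Fin 4) ℝ) (i j : Fin 4) :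
    (B * η * Bᵀ) i j =
      -(B i 0 * B j 0) + (fun k : Fin 3 => B i k.succ) ⬝ᵥ fun k => B j k.succ := by
  simpa using transpose_mul_minkowskiMetric_mul_apply Bᵀ i j

lemma minkowskiMetric_apply_zero_zero : η 0 0 = -1 := rfl

lemma minkowskiMetric_apply_zero_succ (j : Fin 3) : η 0 j.succ = 0 :=
  diagonal_apply_ne _ (Fin.succ_ne_zero j).symm

lemma minkowskiMetric_apply_succ_succ (i j : Fin 3) :
    η i.succ j.succ = (1 : Matrix (Fin 3) (Fin 3) ℝ) i j := by
  fin_cases i <;> fin_cases j <;> rfl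

namespace IsLorentz

variable {B : Matrix (Fin 4) (Fin 4) ℝ} (hB : IsLorentz B)
include hB

lemma neg : IsLorentz (-B) := fun x => by
  rw [neg_mulVec, ← neg_one_smul ℝ, mink_smul, hB]
  ring

/-- Polarization: a symmetric matrix is determined by its quadratic form. -/
lemma transpose_mul_minkowskiMetric_mul : Bᵀ * η * B = η := by
  have h : (toQuadraticForm' η).comp (toLin' B) = toQuadraticForm' η :=
    QuadraticMap.ext fun x => by simpa [← mink_eq_toQuadraticForm'] using hB x
  have := congrArg QuadraticForm.toMatrix' h
  rwa [QuadraticForm.toMatrix'_comp, LinearMap.toMatrix'_toLin',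
    isSymm_minkowskiMetric.toMatrix'_toQuadraticForm'] at this

/-- `η Bᵀ η` is a left inverse of `B`, hence also a right inverse. -/
lemma mul_minkowskiMetric_mul_transpose : B * η * Bᵀ = η := by
  have hleft : (η * Bᵀ * η) * B = 1 := by
    rw [Matrix.mul_assoc, Matrix.mul_assoc, ← Matrix.mul_assoc Bᵀ,
      hB.transpose_mul_minkowskiMetric_mul, minkowskiMetric_mul_self]
  calc B * η * Bᵀ = B * (η * Bᵀ * η) * η := by
        simp only [Matrix.mul_assoc, minkowskiMetric_mul_self, Matrix.mul_one]
    _ = η := by rw [mul_eq_one_comm.mp hleft, Matrix.one_mul]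

lemma apply_zero_zero_sq : B 0 0 ^ 2 = 1 + sq3 (fun i => B i.succ 0) := by
  have h := congrFun (congrFun hB.transpose_mul_minkowskiMetric_mul 0) 0
  rw [transpose_mul_minkowskiMetric_mul_apply, minkowskiMetric_apply_zero_zero] at h
  rw [sq3_eq_dotProduct]
  linear_combination -h

lemma smul_row_zero :
    B 0 0 • (fun j => B 0 j.succ) = (fun i => B i.succ 0) ᵥ* B.submatrix Fin.succ Fin.succ := by
  ext j
  have h := congrFun (congrFun hB.transpose_mul_minkowskiMetric_mul 0) j.succ
  rw [transpose_mul_minkowskiMetric_mul_apply, minkowskiMetric_apply_zero_succ] at h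
  simp only [Pi.smul_apply, smul_eq_mul, vecMul, submatrix_apply]
  linear_combination -h

lemma submatrix_mul_transpose :
    B.submatrix Fin.succ Fin.succ * (B.submatrix Fin.succ Fin.succ)ᵀ =
      1 + vecMulVec (fun i => B i.succ 0) (fun i => B i.succ 0) := by
  ext i j
  have h := congrFun (congrFun hB.mul_minkowskiMetric_mul_transpose i.succ) j.succ
  rw [mul_minkowskiMetric_mul_transpose_apply, minkowskiMetric_apply_succ_succ] at h
  change (fun k : Fin 3 => B i.succ k.succ) ⬝ᵥ (fun k => B j.succ k.succ) =
    (1 : Matrix (Fin 3) (Fin 3) ℝ) i j + B i.succ 0 * B j.succ 0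
  linear_combination h

end IsLorentz

lemma IsScaledLorentz.exists_pos {A : Matrix (Fin 4) (Fin 4) ℝ} (hA : IsScaledLorentz A) :
    ∃ s : ℝ, 0 < s ∧ ∃ B, IsLorentz B ∧ A = s • B := by
  obtain ⟨s, hs, B, hB, rfl⟩ := hA
  rcases hs.lt_or_gt with h | h
  · exact ⟨-s, neg_pos.2 h, -B, hB.neg, (neg_smul_neg s B).symm⟩
  · exact ⟨s, h, B, hB, rfl⟩

section Blocks

variable (a : Matrix (Fin 1) (Fin 1) ℝ) (b : Matrix (Fin 1) (Fin 3) ℝ)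
  (c : Matrix (Fin 3) (Fin 1) ℝ) (d : Matrix (Fin 3) (Fin 3) ℝ)

lemma finSumFinEquiv_symm_succ (k : Fin 3) :
    (finSumFinEquiv (m := 1) (n := 3)).symm k.succ = Sum.inr k := by
  rw [Equiv.symm_apply_eq, finSumFinEquiv_apply_right]
  ext
  simp [add_comm]

lemma blk4_apply_zero_succ (j : Fin 3) : blk4 a b c d 0 j.succ = b 0 j := by
  simp only [blk4, reindex_apply, submatrix_apply, finSumFinEquiv_symm_succ]
  rfl

lemma blk4_apply_succ_zero (i : Fin 3) : blk4 a b c d i.succ 0 = c i 0 := by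
  simp only [blk4, reindex_apply, submatrix_apply, finSumFinEquiv_symm_succ]
  rfl

lemma blk4_submatrix_succ_succ : (blk4 a b c d).submatrix Fin.succ Fin.succ = d := by
  ext i j
  simp [blk4, finSumFinEquiv_symm_succ]

end Blocks

lemma Matrix.ext_of_fin_succ {α : Type*} {n : ℕ} {M N : Matrix (Fin (n + 1)) (Fin (n + 1)) α}
    (h₀₀ : M 0 0 = N 0 0) (h₀ : ∀ j : Fin n, M 0 j.succ = N 0 j.succ)
    (h₁ : ∀ i : Fin n, M i.succ 0 = N i.succ 0)
    (h : M.submatrix Fin.succ Fin.succ = N.submatrix Fin.succ Fin.succ) : M = N := by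
  ext i j
  induction i using Fin.cases <;> induction j using Fin.cases
  exacts [h₀₀, h₀ _, h₁ _, congrFun (congrFun h _) _]

section LorentzFormEntries

variable (e1 e2 : ℝ) (v : Fin 3 → ℝ) (O : Matrix (Fin 3) (Fin 3) ℝ)

lemma lorentzForm_apply_zero_zero : lorentzForm e1 e2 v O 0 0 = e1 * gam v := rfl

lemma lorentzForm_apply_zero_succ (j : Fin 3) :
    lorentzForm e1 e2 v O 0 j.succ = e1 * gam v * (v ᵥ* O) j :=
  blk4_apply_zero_succ ..

lemma lorentzForm_apply_succ_zero (i : Fin 3) :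
    lorentzForm e1 e2 v O i.succ 0 = e2 * gam v * v i :=
  blk4_apply_succ_zero ..

lemma lorentzForm_submatrix_succ_succ :
    (lorentzForm e1 e2 v O).submatrix Fin.succ Fin.succ = e2 • (spatialBoost v * O) :=
  blk4_submatrix_succ_succ ..

end LorentzFormEntries

lemma lorentzForm_neg_neg (e1 e2 : ℝ) (v : Fin 3 → ℝ) (O : Matrix (Fin 3) (Fin 3) ℝ) :
    lorentzForm e1 (-e2) (-v) (-O) = lorentzForm e1 e2 v O := by
  simp only [lorentzForm, gam_neg, vecMulVec_neg, neg_vecMulVec, neg_neg, neg_vecMul, vecMul_neg,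
    Pi.neg_apply, mul_neg, neg_mul, neg_smul, smul_neg]

namespace IsLorentz

variable {B : Matrix (Fin 4) (Fin 4) ℝ} (hB : IsLorentz B)
include hB

theorem exists_eq_lorentzForm_one :
    ∃ e1 v O, e1 ^ 2 = 1 ∧ sq3 v < 1 ∧ O * Oᵀ = 1 ∧ B = lorentzForm e1 1 v O := by
  have hα := hB.apply_zero_zero_sq
  have hrow := hB.smul_row_zero
  set α := B 0 0
  set u : Fin 3 → ℝ := fun i => B i.succ 0
  set d := B.submatrix Fin.succ Fin.succ
  have hg : 0 < |α| := abs_pos.2 fun h => by nlinarith [sq3_nonneg u]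
  obtain ⟨hv, hγ⟩ := gam_inv_smul hg (by rwa [sq_abs])
  set v := |α|⁻¹ • u
  set O := (spatialBoost v)⁻¹ * d
  have hP := isUnit_det_spatialBoost hv
  have hPP : spatialBoost v * spatialBoost v = 1 + vecMulVec u u := by
    rw [spatialBoost_mul_self hv, hγ, vecMulVec_smul, smul_vecMulVec, smul_smul, smul_smul,
      sq, mul_inv_cancel_right₀ hg.ne', mul_inv_cancel₀ hg.ne', one_smul]
  have hvO : v ᵥ* O = (α / |α| ^ 2) • fun j => B 0 j.succ := by
    rw [← vecMul_vecMul, vecMul_spatialBoost_inv hv, hγ, smul_vecMul, smul_vecMul,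
      ← hrow, smul_smul, smul_smul]
    congr 1
    ring
  refine ⟨α / |α|, v, O, by rw [div_pow, sq_abs, div_self (pow_ne_zero 2 (abs_pos.mp hg))], hv,
    ?_, ?_⟩
  · rw [transpose_mul, transpose_nonsing_inv, transpose_spatialBoost, Matrix.mul_assoc,
      ← Matrix.mul_assoc d, hB.submatrix_mul_transpose, ← hPP, mul_nonsing_inv_cancel_right _ _ hP,
      nonsing_inv_mul _ hP]
  · apply Matrix.ext_of_fin_succ
    · rw [lorentzForm_apply_zero_zero, hγ, div_mul_cancel₀ _ hg.ne']
    · intro j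
      rw [lorentzForm_apply_zero_succ, hγ, hvO, Pi.smul_apply, smul_eq_mul]
      field_simp
      rw [sq_abs]
    · intro i
      rw [lorentzForm_apply_succ_zero, hγ, one_mul]
      exact (mul_inv_cancel_left₀ hg.ne' _).symm
    · rw [lorentzForm_submatrix_succ_succ, one_smul, mul_nonsing_inv_cancel_left _ _ hP]

theorem exists_eq_lorentzForm :
    ∃ e1 e2 v O, e1 ^ 2 = 1 ∧ e2 ^ 2 = 1 ∧ sq3 v < 1 ∧ SO3 O ∧ B = lorentzForm e1 e2 v O := by
  obtain ⟨e1, v, O, he1, hv, hO, rfl⟩ := hB.exists_eq_lorentzForm_one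
  have hOt : Oᵀ * O = 1 := mul_eq_one_comm.mp hO
  have hdet : O.det ^ 2 = 1 := by simpa [sq] using congrArg det hOt
  rcases sq_eq_one_iff.mp hdet with h | h
  · exact ⟨e1, 1, v, O, he1, one_pow 2, hv, ⟨hOt, h⟩, rfl⟩
  · refine ⟨e1, -1, -v, -O, he1, by norm_num, by rwa [sq3_neg], ⟨by simpa, ?_⟩,
      (lorentzForm_neg_neg ..).symm⟩
    rw [det_neg]
    norm_num [h]

end IsLorentz

lemma mink_lorentzForm_col_zero {e1 e2 : ℝ} {v : Fin 3 → ℝ} (O : Matrix (Fin 3) (Fin 3) ℝ)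
    (he1 : e1 ^ 2 = 1) (he2 : e2 ^ 2 = 1) (hv : sq3 v < 1) :
    mink (fun i => lorentzForm e1 e2 v O i 0) = -1 := by
  have h1 : lorentzForm e1 e2 v O 1 0 = e2 * gam v * v 0 :=
    lorentzForm_apply_succ_zero e1 e2 v O 0
  have h2 : lorentzForm e1 e2 v O 2 0 = e2 * gam v * v 1 :=
    lorentzForm_apply_succ_zero e1 e2 v O 1
  have h3 : lorentzForm e1 e2 v O 3 0 = e2 * gam v * v 2 :=
    lorentzForm_apply_succ_zero e1 e2 v O 2
  have hγ := gam_sq_mul_one_sub_sq3 hv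
  rw [mink, lorentzForm_apply_zero_zero, h1, h2, h3]
  rw [sq3] at hγ
  linear_combination (gam v ^ 2 * (v 0 ^ 2 + v 1 ^ 2 + v 2 ^ 2)) * he2 - gam v ^ 2 * he1 - hγ

lemma scale_eq_of_smul_lorentzForm_eq {s s' e1 e1' e2 e2' : ℝ} {v v' : Fin 3 → ℝ}
    {O O' : Matrix (Fin 3) (Fin 3) ℝ} (hs : 0 < s) (hs' : 0 < s') (he1 : e1 ^ 2 = 1)
    (he1' : e1' ^ 2 = 1) (he2 : e2 ^ 2 = 1) (he2' : e2' ^ 2 = 1) (hv : sq3 v < 1)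
    (hv' : sq3 v' < 1) (h : s • lorentzForm e1 e2 v O = s' • lorentzForm e1' e2' v' O') :
    s = s' := by
  have hcol := congrArg (fun M : Matrix (Fin 4) (Fin 4) ℝ => mink fun i => M i 0) h
  simp only [Matrix.smul_apply] at hcol
  rw [← Pi.smul_def, ← Pi.smul_def, mink_smul, mink_smul, mink_lorentzForm_col_zero O he1 he2 hv,
    mink_lorentzForm_col_zero O' he1' he2' hv'] at hcol
  exact (pow_left_inj₀ hs.le hs'.le two_ne_zero).mp (by linarith)

lemma eq_of_lorentzForm_eq {e1 e1' e2 e2' : ℝ} {v v' : Fin 3 → ℝ}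
    {O O' : Matrix (Fin 3) (Fin 3) ℝ} (he1 : e1 ^ 2 = 1) (he1' : e1' ^ 2 = 1) (he2 : e2 ^ 2 = 1)
    (he2' : e2' ^ 2 = 1) (hv : sq3 v < 1) (hv' : sq3 v' < 1) (hO : O.det = 1) (hO' : O'.det = 1)
    (h : lorentzForm e1 e2 v O = lorentzForm e1' e2' v' O') :
    e1 = e1' ∧ e2 = e2' ∧ v = v' ∧ O = O' := by
  have hγ := gam_pos hv
  have h₀₀ : e1 * gam v = e1' * gam v' := by
    simpa only [lorentzForm_apply_zero_zero] using congrFun (congrFun h 0) 0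
  have hγγ : gam v = gam v' := by
    refine (pow_left_inj₀ hγ.le (gam_pos hv').le two_ne_zero).mp ?_
    linear_combination (e1 * gam v + e1' * gam v') * h₀₀ - gam v ^ 2 * he1 + gam v' ^ 2 * he1'
  rw [← hγγ] at h₀₀
  have he2ne : e2 ≠ 0 := by
    rintro rfl
    norm_num at he2
  have hsub := congrArg (fun M : Matrix (Fin 4) (Fin 4) ℝ => M.submatrix Fin.succ Fin.succ) h
  simp only [lorentzForm_submatrix_succ_succ] at hsub
  have he2e : e2 = e2' := by
    have hdet := congrArg det hsub
    simp only [det_smul, det_mul, det_spatialBoost hv, det_spatialBoost hv', hO, hO', ← hγγ,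
      Fintype.card_fin] at hdet
    refine mul_right_cancel₀ hγ.ne' ?_
    linear_combination hdet - gam v * e2 * he2 + gam v * e2' * he2'
  subst he2e
  have hvv : v = v' := funext fun i => by
    have hi := congrFun (congrFun h i.succ) 0
    simp only [lorentzForm_apply_succ_zero, ← hγγ] at hi
    exact mul_left_cancel₀ (mul_ne_zero he2ne hγ.ne') hi
  subst hvv
  refine ⟨mul_right_cancel₀ hγ.ne' h₀₀, rfl, rfl, ?_⟩
  simpa [nonsing_inv_mul_cancel_left _ _ (isUnit_det_spatialBoost hv)] using
    congrArg ((spatialBoost v)⁻¹ * ·) (smul_right_injective _ he2ne hsub)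

/-- Any scaled Lorentz transformation can be written uniquely as s·lorentzForm ε₁ ε₂ v O
with s > 0, |v| < 1, O ∈ SO(3,ℝ) and ε₁, ε₂ ∈ {−1,1}. -/
theorem scaled_lorentz_decomposition (A : Matrix (Fin 4) (Fin 4) ℝ)
    (hA : IsScaledLorentz A) :
    ∃! p : ℝ × (Fin 3 → ℝ) × Matrix (Fin 3) (Fin 3) ℝ × ℝ × ℝ,
      0 < p.1 ∧ Real.sqrt (sq3 p.2.1) < 1 ∧ SO3 p.2.2.1 ∧
      (p.2.2.2.1 = 1 ∨ p.2.2.2.1 = -1) ∧ (p.2.2.2.2 = 1 ∨ p.2.2.2.2 = -1) ∧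
      A = p.1 • lorentzForm p.2.2.2.1 p.2.2.2.2 p.2.1 p.2.2.1 := by
  obtain ⟨s, hs, B, hB, rfl⟩ := hA.exists_pos
  obtain ⟨e1, e2, v, O, he1, he2, hv, hO, rfl⟩ := hB.exists_eq_lorentzForm
  refine ⟨(s, v, O, e1, e2), ⟨hs, sqrt_sq3_lt_one_iff.2 hv, hO, sq_eq_one_iff.1 he1,
    sq_eq_one_iff.1 he2, rfl⟩, ?_⟩
  rintro ⟨s', v', O', e1', e2'⟩ ⟨hs', hv', hO', he1', he2', h⟩
  rw [sqrt_sq3_lt_one_iff] at hv'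
  rw [← sq_eq_one_iff] at he1' he2'
  obtain rfl := scale_eq_of_smul_lorentzForm_eq hs hs' he1 he1' he2 he2' hv hv' h
  obtain ⟨rfl, rfl, rfl, rfl⟩ :=
    eq_of_lorentzForm_eq he1 he1' he2 he2' hv hv' hO.2 hO'.2 (smul_right_injective _ hs.ne' h)
  rfl
end

section
/- Let Ω ⊆ ℝ² be an open set with coordinates (u,v). Let ρ, ρ* : Ω → ℝ be positive differentiable functions and n = (n₁,n₂,n₃), n* = (n₁*,n₂*,n₃*) : Ω → ℝ³ be differentiable maps with |n| = |n*| = 1, n₃ < 0 and n₃* < 0 on Ω. Set m = ρ·(1, n₁, n₂, n₃) : Ω → ℝ⁴ and m* = ρ*·(1, n₁*, n₂*, n₃*), and suppose m* = A m on Ω for some scaled Lorentz transformation A. Assume both normal fields are integrable: ∂_v(n₁/n₃) = ∂_u(n₂/n₃) and ∂_v(n₁*/n₃*) = ∂_u(n₂*/n₃*) on Ω. Assume the surface is non-degenerate: the 11 functions c^{i,j}_u for 1 ≤ i < j ≤ 4 together with c^{i,j}_v for (i,j) ∈ {(1,2),(1,3),(1,4),(2,3),(3,4)}, formed from the components of m,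 are linearly independent over ℝ as real-valued functions on Ω. Then A = α·diag(1, λ, λ, 1) for some α > 0 and λ ∈ {−1, 1}. -/
/-- Partial derivative with respect to the first coordinate u. -/
noncomputable def pu (g : ℝ × ℝ → ℝ) (x : ℝ × ℝ) : ℝ := fderiv ℝ g x (1, 0)

/-- Partial derivative with respect to the second coordinate v. -/
noncomputable def pv (g : ℝ × ℝ → ℝ) (x : ℝ × ℝ) : ℝ := fderiv ℝ g x (0, 1)

/-- c^{i,j}_k = c_j·∂_k c_i − c_i·∂_k c_j, where d is the partial derivative ∂_k. -/
noncomputable def cmin (d : (ℝ × ℝ → ℝ) → ℝ × ℝ → ℝ) (c : Fin 4 → ℝ × ℝ → ℝ)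
    (i j : Fin 4) (x : ℝ × ℝ) : ℝ :=
  c j x * d (c i) x - c i x * d (c j) x

/-!
Indices run over `0, …, 3`, so the paper's `c^{i,j}` is `cmin _ _ (i-1) (j-1)` here.

Under `m* = A m` the functions `c^{i,j}_k` transform by the 2×2 minors of `A`. The integrability
condition reads `c^{1,3}_v = c^{2,3}_u`, for `m` and for `m*`. Expanding the condition for `m*`
through `A` and eliminating `c^{1,3}_v` with the condition for `m` gives a linear relation among
the eleven independent functions, so its coefficients, which are minors of `A` taken from rows
`{1,3}` and `{2,3}`, all vanish. As `A` is invertible, the minor in columns `{1,3}` of rows `{1,3}`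
is nonzero, and the vanishing minors then force `A` into the shape
`!![*, *, *, *; 0, b, 0, *; 0, 0, b, *; 0, 0, 0, c]`. The scaled Lorentz condition
`Aᵀ η A = s² η` clears the remaining off-diagonal entries and gives `A = diag(a, b, b, c)` with
`a² = b² = c²`. Finally `a > 0` because `ρ, ρ* > 0` and `c > 0` because `n₃, n₃* < 0`.
-/

open Matrix

namespace Matrix

theorem eq_of_isSymm_of_dotProduct_mulVec_eq {n K : Type*} [Fintype n] [DecidableEq n]
    [Field K] [CharZero K] {S T : Matrix n n K} (hS : S.IsSymm) (hT : T.IsSymm)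
    (h : ∀ x, x ⬝ᵥ S *ᵥ x = x ⬝ᵥ T *ᵥ x) : S = T := by
  ext i j
  have hij := h (Pi.single i 1 + Pi.single j 1)
  have hi := h (Pi.single i 1)
  have hj := h (Pi.single j 1)
  simp only [mulVec_add, dotProduct_add, add_dotProduct, mulVec_single_one, single_dotProduct,
    col_apply, one_mul] at hij hi hj
  have hS' := hS.apply i j
  have hT' := hT.apply i j
  linear_combination (1/2 : K) * hij - (1/2) * hi - (1/2) * hj - (1/2) * hS' + (1/2) * hT'

end Matrix

abbrev minkowskiMatrix : Matrix (Fin 4) (Fin 4) ℝ := diagonal ![-1, 1, 1, 1]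

theorem mink_eq_dotProduct (x : Fin 4 → ℝ) : mink x = x ⬝ᵥ minkowskiMatrix *ᵥ x := by
  simp only [mink, dotProduct, Fin.sum_univ_four, mulVec_diagonal, Fin.isValue, cons_val_zero,
    cons_val_one, cons_val, one_mul, neg_mul, mul_neg]
  ring

theorem IsLorentz.transpose_mul_mul {B : Matrix (Fin 4) (Fin 4) ℝ} (hB : IsLorentz B) :
    Bᵀ * minkowskiMatrix * B = minkowskiMatrix := by
  refine eq_of_isSymm_of_dotProduct_mulVec_eq ?_ (isSymm_diagonal _) fun x => ?_
  · simp [IsSymm, transpose_mul, Matrix.mul_assoc]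
  · rw [← mink_eq_dotProduct, ← hB, mink_eq_dotProduct, ← mulVec_mulVec, ← mulVec_mulVec,
      dotProduct_mulVec, vecMul_transpose]

theorem IsScaledLorentz.exists_transpose_mul_mul {A : Matrix (Fin 4) (Fin 4) ℝ}
    (hA : IsScaledLorentz A) :
    ∃ s : ℝ, s ≠ 0 ∧ Aᵀ * minkowskiMatrix * A = s ^ 2 • minkowskiMatrix := by
  obtain ⟨s, hs, B, hB, rfl⟩ := hA
  refine ⟨s, hs, ?_⟩
  rw [transpose_smul, Matrix.smul_mul, Matrix.mul_smul, Matrix.smul_mul, hB.transpose_mul_mul,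
    smul_smul, sq]

theorem det_ne_zero_of_transpose_mul_mul {A : Matrix (Fin 4) (Fin 4) ℝ} {s : ℝ} (hs : s ≠ 0)
    (hA : Aᵀ * minkowskiMatrix * A = s ^ 2 • minkowskiMatrix) : A.det ≠ 0 := by
  intro h
  exact hs (by simpa [det_mul, h, Fin.prod_univ_four] using congrArg det hA)

def minor2 (A : Matrix (Fin 4) (Fin 4) ℝ) (i j p q : Fin 4) : ℝ := A i p * A j q - A i q * A j p

/-- The coefficients, in the basis `cminFamily Ω m`, of `c*^{1,3}_v - c*^{2,3}_u` after expanding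
`c*^{i,j} = ∑_{p<q} minor2 A i j p q * c^{p,q}` and substituting `c^{1,3}_v = c^{2,3}_u`. -/
def integrabilityCoeffs (A : Matrix (Fin 4) (Fin 4) ℝ) : Fin 11 → ℝ :=
  ![-minor2 A 2 3 0 1, -minor2 A 2 3 0 2, -minor2 A 2 3 0 3, -minor2 A 2 3 1 2,
    -minor2 A 2 3 1 3, minor2 A 1 3 1 3 - minor2 A 2 3 2 3,
    minor2 A 1 3 0 1, minor2 A 1 3 0 2, minor2 A 1 3 0 3, minor2 A 1 3 1 2, minor2 A 1 3 2 3]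

theorem eq_zero_of_det_ne_zero_of_minors_eq_zero {K : Type*} [Field K] {a b c d x y : K}
    (hμ : a * d - b * c ≠ 0) (hxa : x * c - a * y = 0) (hxb : x * d - b * y = 0) :
    x = 0 ∧ y = 0 := by
  constructor
  · have h : (a * d - b * c) * x = 0 := by linear_combination a * hxb - b * hxa
    exact (mul_eq_zero.mp h).resolve_left hμ
  · have h : (a * d - b * c) * y = 0 := by linear_combination c * hxb - d * hxa
    exact (mul_eq_zero.mp h).resolve_left hμ

theorem eq_of_integrabilityCoeffs_eq_zero {A : Matrix (Fin 4) (Fin 4) ℝ} (hdet : A.det ≠ 0)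
    (h : integrabilityCoeffs A = 0) :
    A = !![A 0 0, A 0 1, A 0 2, A 0 3; 0, A 1 1, 0, A 1 3; 0, 0, A 1 1, A 2 3; 0, 0, 0, A 3 3] := by
  have h1 := congrFun h 1; have h2 := congrFun h 2; have h3 := congrFun h 3
  have h4 := congrFun h 4; have h5 := congrFun h 5; have h6 := congrFun h 6
  have h7 := congrFun h 7; have h8 := congrFun h 8; have h9 := congrFun h 9
  have h10 := congrFun h 10
  simp only [integrabilityCoeffs, minor2, Fin.isValue, cons_val, neg_eq_zero, Pi.zero_apply]
    at h1 h2 h3 h4 h5 h6 h7 h8 h9 h10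
  -- Laplace expansion along rows 1 and 3, where only the minor in columns 1, 3 survives.
  have hlap : A.det = (A 1 1 * A 3 3 - A 1 3 * A 3 1) * (A 0 0 * A 2 2 - A 0 2 * A 2 0) := by
    rw [det_succ_row_zero]
    simp only [Nat.succ_eq_add_one, Nat.reduceAdd, Fin.isValue, det_fin_three, submatrix_apply,
      Fin.succ_zero_eq_one, Fin.succAbove, Fin.castSucc_zero, Fin.succ_one_eq_two, Fin.castSucc_one,
      Fin.reduceSucc, Fin.reduceCastSucc, Fin.sum_univ_four, Fin.coe_ofNat_eq_mod, Nat.zero_mod,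
      pow_zero, one_mul, lt_self_iff_false, ↓reduceIte, not_lt_zero, Nat.one_mod, pow_one, neg_mul,
      zero_lt_one, Fin.lt_one_iff, Fin.reduceEq, Nat.reduceMod, even_two, Even.neg_pow, one_pow,
      Fin.reduceLT, Nat.mod_succ]
    linear_combination (-(A 0 2 * A 2 3 - A 0 3 * A 2 2)) * h6
      + (A 0 1 * A 2 3 - A 0 3 * A 2 1) * h7 + (-(A 0 1 * A 2 2 - A 0 2 * A 2 1)) * h8
      + (-(A 0 0 * A 2 3 - A 0 3 * A 2 0)) * h9 + (-(A 0 0 * A 2 1 - A 0 1 * A 2 0)) * h10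
  have hμ : A 1 1 * A 3 3 - A 1 3 * A 3 1 ≠ 0 := left_ne_zero_of_mul (hlap ▸ hdet)
  have hν : A 2 2 * A 3 3 - A 2 3 * A 3 2 ≠ 0 := sub_eq_zero.mp h5 ▸ hμ
  obtain ⟨z10, z30⟩ := eq_zero_of_det_ne_zero_of_minors_eq_zero hμ h6 h8
  obtain ⟨z12, z32⟩ := eq_zero_of_det_ne_zero_of_minors_eq_zero hμ (by linear_combination -h9) h10
  obtain ⟨z20, -⟩ := eq_zero_of_det_ne_zero_of_minors_eq_zero hν h1 h2
  obtain ⟨z21, z31⟩ := eq_zero_of_det_ne_zero_of_minors_eq_zero hν h3 h4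
  have h33 : A 3 3 ≠ 0 := right_ne_zero_of_mul (by simpa [z31] using hμ)
  have z22 : A 2 2 = A 1 1 := by
    have h : (A 2 2 - A 1 1) * A 3 3 = 0 := by linear_combination -h5 - A 1 3 * z31 + A 2 3 * z32
    exact sub_eq_zero.mp ((mul_eq_zero.mp h).resolve_right h33)
  ext i j
  fin_cases i <;> fin_cases j <;> simp [z10, z12, z20, z21, z22, z30, z31, z32]

theorem upper_eq_diagonal_of_transpose_mul_mul {a b c p q r t w s : ℝ} (hs : s ≠ 0)
    (h : !![a, p, q, r; 0, b, 0, t; 0, 0, b, w; 0, 0, 0, c]ᵀ * minkowskiMatrix *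
      !![a, p, q, r; 0, b, 0, t; 0, 0, b, w; 0, 0, 0, c] = s ^ 2 • minkowskiMatrix) :
    !![a, p, q, r; 0, b, 0, t; 0, 0, b, w; 0, 0, 0, c] = diagonal ![a, b, b, c] ∧
      b ^ 2 = a ^ 2 ∧ c ^ 2 = a ^ 2 := by
  have e : ∀ i j, _ := fun i j => congrFun (congrFun h i) j
  have e00 : a * a = s ^ 2 := by simpa [mul_apply, Fin.sum_univ_four] using e 0 0
  have e01 : a = 0 ∨ p = 0 := by simpa [mul_apply, Fin.sum_univ_four] using e 0 1
  have e02 : a = 0 ∨ q = 0 := by simpa [mul_apply, Fin.sum_univ_four] using e 0 2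
  have e03 : a = 0 ∨ r = 0 := by simpa [mul_apply, Fin.sum_univ_four] using e 0 3
  have e11 : -(p * p) + b * b = s ^ 2 := by simpa [mul_apply, Fin.sum_univ_four] using e 1 1
  have e13 : -(p * r) + b * t = 0 := by simpa [mul_apply, Fin.sum_univ_four] using e 1 3
  have e23 : -(q * r) + b * w = 0 := by simpa [mul_apply, Fin.sum_univ_four] using e 2 3
  have e33 : -(r * r) + t * t + w * w + c * c = s ^ 2 := by
    simpa [mul_apply, Fin.sum_univ_four] using e 3 3
  have ha : a ≠ 0 := by rintro rfl; exact pow_ne_zero 2 hs (by linarith)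
  obtain rfl := e01.resolve_left ha
  obtain rfl := e02.resolve_left ha
  obtain rfl := e03.resolve_left ha
  have hb : b ≠ 0 := by rintro rfl; exact pow_ne_zero 2 hs (by linarith)
  obtain rfl : t = 0 := by simpa [hb] using e13
  obtain rfl : w = 0 := by simpa [hb] using e23
  refine ⟨?_, by linarith, by linarith⟩
  ext i j
  fin_cases i <;> fin_cases j <;> rfl

theorem diagonal_eq_smul_of_sq_eq {a b c : ℝ} (ha : 0 < a) (hc : 0 < c) (hb : b ^ 2 = a ^ 2)
    (hca : c ^ 2 = a ^ 2) :
    ∃ α : ℝ, 0 < α ∧ ∃ l : ℝ, (l = 1 ∨ l = -1) ∧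
      diagonal ![a, b, b, c] = α • diagonal ![1, l, l, 1] := by
  obtain rfl := (sq_eq_sq₀ hc.le ha.le).mp hca
  refine ⟨c, hc, ?_⟩
  rcases sq_eq_sq_iff_eq_or_eq_neg.mp hb with rfl | rfl
  · exact ⟨1, Or.inl rfl, by ext i j; fin_cases i <;> fin_cases j <;> simp [diagonal]⟩
  · exact ⟨-1, Or.inr rfl, by ext i j; fin_cases i <;> fin_cases j <;> simp [diagonal]⟩

section Calculus

open Topology

variable {E : Type*} [NormedAddCommGroup E] [NormedSpace ℝ E] {f g ρ : E → ℝ} {x : E}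

theorem sq_mul_fderiv_div_apply (hf : DifferentiableAt ℝ f x) (hg : DifferentiableAt ℝ g x)
    (hgx : g x ≠ 0) (w : E) :
    g x ^ 2 * fderiv ℝ (fun y => f y / g y) x w = g x * fderiv ℝ f x w - f x * fderiv ℝ g x w := by
  have hfg : DifferentiableAt ℝ (fun y => f y / g y) x := by
    simp only [div_eq_mul_inv]
    exact hf.mul (hg.inv hgx)
  have hf_eq : (fun y => f y / g y * g y) =ᶠ[𝓝 x] f := by
    filter_upwards [hg.continuousAt.eventually_ne hgx] with y hy
    field_simp
  have h := congrArg (· w) (fderiv_fun_mul hfg hg)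
  rw [hf_eq.fderiv_eq] at h
  simp only [_root_.add_apply, _root_.smul_apply, smul_eq_mul] at h
  rw [h]
  field_simp
  ring

theorem mul_fderiv_mul_sub_mul_fderiv_mul (hρ : DifferentiableAt ℝ ρ x)
    (hf : DifferentiableAt ℝ f x) (hg : DifferentiableAt ℝ g x) (w : E) :
    ρ x * g x * fderiv ℝ (fun y => ρ y * f y) x w - ρ x * f x * fderiv ℝ (fun y => ρ y * g y) x w
      = ρ x ^ 2 * (g x * fderiv ℝ f x w - f x * fderiv ℝ g x w) := by
  rw [fderiv_fun_mul hρ hf, fderiv_fun_mul hρ hg]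
  simp only [_root_.add_apply, _root_.smul_apply, smul_eq_mul]
  ring

theorem fderiv_eq_sum_of_eqOn {ι : Type*} [Fintype ι] {Ω : Set E} (hΩ : IsOpen Ω) (hx : x ∈ Ω)
    {a : ι → ℝ} {h : ι → E → ℝ} (hh : ∀ i, DifferentiableAt ℝ (h i) x)
    (hf : ∀ y ∈ Ω, f y = ∑ i, a i * h i y) :
    fderiv ℝ f x = ∑ i, a i • fderiv ℝ (h i) x := by
  have hf_eq : f =ᶠ[𝓝 x] fun y => ∑ i, a i * h i y :=
    Filter.eventually_of_mem (hΩ.mem_nhds hx) hf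
  rw [hf_eq.fderiv_eq, fderiv_fun_sum fun i _ => (hh i).const_mul (a i)]
  simp only [fderiv_const_mul (hh _)]

end Calculus

theorem cmin_pv_eq_cmin_pu_of_integrable {ρ n1 n2 n3 : ℝ × ℝ → ℝ} {x : ℝ × ℝ}
    (hρ : DifferentiableAt ℝ ρ x) (hn1 : DifferentiableAt ℝ n1 x) (hn2 : DifferentiableAt ℝ n2 x)
    (hn3 : DifferentiableAt ℝ n3 x) (hn3x : n3 x ≠ 0)
    (h : pv (fun y => n1 y / n3 y) x = pu (fun y => n2 y / n3 y) x) :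
    cmin pv ![ρ, fun y => ρ y * n1 y, fun y => ρ y * n2 y, fun y => ρ y * n3 y] 1 3 x =
      cmin pu ![ρ, fun y => ρ y * n1 y, fun y => ρ y * n2 y, fun y => ρ y * n3 y] 2 3 x := by
  simp only [cmin, pu, pv] at h ⊢
  simp only [Fin.isValue, cons_val]
  rw [mul_fderiv_mul_sub_mul_fderiv_mul hρ hn1 hn3, mul_fderiv_mul_sub_mul_fderiv_mul hρ hn2 hn3,
    ← sq_mul_fderiv_div_apply hn1 hn3 hn3x, ← sq_mul_fderiv_div_apply hn2 hn3 hn3x, h]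

theorem cmin_eq_sum_of_eqOn {Ω : Set (ℝ × ℝ)} (hΩ : IsOpen Ω) {x : ℝ × ℝ} (hx : x ∈ Ω)
    {m mstar : Fin 4 → ℝ × ℝ → ℝ} {A : Matrix (Fin 4) (Fin 4) ℝ}
    (hm : ∀ j, DifferentiableAt ℝ (m j) x)
    (hrel : ∀ y ∈ Ω, ∀ i, mstar i y = ∑ j, A i j * m j y) (w : ℝ × ℝ) (i j : Fin 4) :
    cmin (fun g y => fderiv ℝ g y w) mstar i j x =
      ∑ p, ∑ q, A i p * A j q * cmin (fun g y => fderiv ℝ g y w) m p q x := by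
  simp only [cmin]
  rw [fderiv_eq_sum_of_eqOn hΩ hx hm (fun y hy => hrel y hy i),
    fderiv_eq_sum_of_eqOn hΩ hx hm (fun y hy => hrel y hy j), hrel x hx i, hrel x hx j]
  simp only [Fin.sum_univ_four, _root_.add_apply, _root_.smul_apply, smul_eq_mul]
  ring

noncomputable def cminFamily (Ω : Set (ℝ × ℝ)) (m : Fin 4 → ℝ × ℝ → ℝ) : Fin 11 → Ω → ℝ :=
  fun k x => (![cmin pu m 0 1, cmin pu m 0 2, cmin pu m 0 3, cmin pu m 1 2, cmin pu m 1 3,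
    cmin pu m 2 3, cmin pv m 0 1, cmin pv m 0 2, cmin pv m 0 3, cmin pv m 1 2, cmin pv m 2 3] k)
    (x : ℝ × ℝ)

theorem integrabilityCoeffs_eq_zero {Ω : Set (ℝ × ℝ)} {m mstar : Fin 4 → ℝ × ℝ → ℝ}
    {A : Matrix (Fin 4) (Fin 4) ℝ} (hindep : LinearIndependent ℝ (cminFamily Ω m))
    (hm : ∀ x ∈ Ω, cmin pv m 1 3 x = cmin pu m 2 3 x)
    (hmstar : ∀ x ∈ Ω, cmin pv mstar 1 3 x = cmin pu mstar 2 3 x)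
    (hu : ∀ x ∈ Ω, ∀ i j, cmin pu mstar i j x = ∑ p, ∑ q, A i p * A j q * cmin pu m p q x)
    (hv : ∀ x ∈ Ω, ∀ i j, cmin pv mstar i j x = ∑ p, ∑ q, A i p * A j q * cmin pv m p q x) :
    integrabilityCoeffs A = 0 := by
  refine funext <| Fintype.linearIndependent_iff.mp hindep _ <| funext fun ⟨x, hx⟩ => ?_
  have hrel := hmstar x hx
  rw [hu x hx, hv x hx] at hrel
  simp only [Fin.sum_univ_four] at hrel
  simp only [integrabilityCoeffs, minor2, Fin.isValue, neg_sub, Finset.sum_apply, Pi.smul_apply,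
    cminFamily, Nat.succ_eq_add_one, Nat.reduceAdd, cons_val', cons_val_fin_one, smul_eq_mul,
    Fin.sum_univ_succ, cons_val_zero, cons_val_succ, Finset.univ_unique, Fin.default_eq_zero,
    Finset.sum_const, Finset.card_singleton, one_smul, Pi.zero_apply]
  simp only [cmin] at hrel hm ⊢
  linear_combination hrel - (A 1 1 * A 3 3 - A 1 3 * A 3 1) * hm x hx

theorem orthographic_uniqueness_general
    (Ω : Set (ℝ × ℝ)) (hΩ : IsOpen Ω)
    (ρ ρs n1 n2 n3 n1s n2s n3s : ℝ × ℝ → ℝ)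
    (hρ : ∀ x ∈ Ω, DifferentiableAt ℝ ρ x) (hρs : ∀ x ∈ Ω, DifferentiableAt ℝ ρs x)
    (hρpos : ∀ x ∈ Ω, 0 < ρ x) (hρspos : ∀ x ∈ Ω, 0 < ρs x)
    (hn1 : ∀ x ∈ Ω, DifferentiableAt ℝ n1 x) (hn2 : ∀ x ∈ Ω, DifferentiableAt ℝ n2 x)
    (hn3 : ∀ x ∈ Ω, DifferentiableAt ℝ n3 x)
    (hn1s : ∀ x ∈ Ω, DifferentiableAt ℝ n1s x) (hn2s : ∀ x ∈ Ω, DifferentiableAt ℝ n2s x)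
    (hn3s : ∀ x ∈ Ω, DifferentiableAt ℝ n3s x)
    (hn3neg : ∀ x ∈ Ω, n3 x < 0) (hn3sneg : ∀ x ∈ Ω, n3s x < 0)
    (m mstar : Fin 4 → ℝ × ℝ → ℝ)
    (hm : m = ![ρ, fun x => ρ x * n1 x, fun x => ρ x * n2 x, fun x => ρ x * n3 x])
    (hms : mstar = ![ρs, fun x => ρs x * n1s x, fun x => ρs x * n2s x,
      fun x => ρs x * n3s x])
    (A : Matrix (Fin 4) (Fin 4) ℝ) (hA : IsScaledLorentz A)
    (hrel : ∀ x ∈ Ω, ∀ i : Fin 4, mstar i x = ∑ j : Fin 4, A i j * m j x)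
    (hint : ∀ x ∈ Ω,
      pv (fun y => n1 y / n3 y) x = pu (fun y => n2 y / n3 y) x)
    (hints : ∀ x ∈ Ω,
      pv (fun y => n1s y / n3s y) x = pu (fun y => n2s y / n3s y) x)
    (hnondeg : LinearIndependent ℝ
      (fun (k : Fin 11) (x : Ω) =>
        (![cmin pu m 0 1, cmin pu m 0 2, cmin pu m 0 3,
           cmin pu m 1 2, cmin pu m 1 3, cmin pu m 2 3,
           cmin pv m 0 1, cmin pv m 0 2, cmin pv m 0 3,
           cmin pv m 1 2, cmin pv m 2 3] k) (x : ℝ × ℝ))) :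
    ∃ α : ℝ, 0 < α ∧ ∃ l : ℝ, (l = 1 ∨ l = -1) ∧
      A = α • Matrix.diagonal ![1, l, l, 1] := by
  subst hm hms
  have hdm : ∀ x ∈ Ω, ∀ j, DifferentiableAt ℝ
      (![ρ, fun y => ρ y * n1 y, fun y => ρ y * n2 y, fun y => ρ y * n3 y] j) x := by
    intro x hx j
    fin_cases j
    exacts [hρ x hx, (hρ x hx).mul (hn1 x hx), (hρ x hx).mul (hn2 x hx), (hρ x hx).mul (hn3 x hx)]
  obtain ⟨s, hs, hgram⟩ := hA.exists_transpose_mul_mul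
  have hcoeffs : integrabilityCoeffs A = 0 := integrabilityCoeffs_eq_zero hnondeg
    (fun x hx => cmin_pv_eq_cmin_pu_of_integrable (hρ x hx) (hn1 x hx) (hn2 x hx) (hn3 x hx)
      (hn3neg x hx).ne (hint x hx))
    (fun x hx => cmin_pv_eq_cmin_pu_of_integrable (hρs x hx) (hn1s x hx) (hn2s x hx) (hn3s x hx)
      (hn3sneg x hx).ne (hints x hx))
    (fun x hx => cmin_eq_sum_of_eqOn hΩ hx (hdm x hx) hrel (1, 0))
    (fun x hx => cmin_eq_sum_of_eqOn hΩ hx (hdm x hx) hrel (0, 1))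
  have hupper := eq_of_integrabilityCoeffs_eq_zero (det_ne_zero_of_transpose_mul_mul hs hgram)
    hcoeffs
  rw [hupper] at hgram
  obtain ⟨hdiag, hb, hc⟩ := upper_eq_diagonal_of_transpose_mul_mul hs hgram
  rw [hdiag] at hupper
  obtain ⟨x, hx⟩ : Ω.Nonempty := by
    by_contra h
    exact hnondeg.ne_zero 0 (funext fun y => (h ⟨y, y.2⟩).elim)
  rw [hupper] at hrel ⊢
  have h0 : ρs x = A 0 0 * ρ x := by simpa [Fin.sum_univ_four, diagonal] using hrel x hx 0
  have h3 : ρs x * n3s x = A 3 3 * (ρ x * n3 x) := by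
    simpa [Fin.sum_univ_four, diagonal] using hrel x hx 3
  refine diagonal_eq_smul_of_sq_eq ?_ ?_ hb hc
  · exact pos_of_mul_pos_left (h0 ▸ hρspos x hx) (hρpos x hx).le
  · exact pos_of_mul_neg_left (h3 ▸ mul_neg_of_pos_of_neg (hρspos x hx) (hn3sneg x hx))
      (mul_neg_of_pos_of_neg (hρpos x hx) (hn3neg x hx)).le

/-- Under orthographic projection, a scaled Lorentz transformation relating two
integrable, non-degenerate photometric stereo solutions must be α·diag(1,λ,λ,1)
with α > 0 and λ ∈ {−1,1}: only the global concave/convex ambiguity remains. -/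
theorem orthographic_uniqueness
    (Ω : Set (ℝ × ℝ)) (hΩ : IsOpen Ω)
    (ρ ρs n1 n2 n3 n1s n2s n3s : ℝ × ℝ → ℝ)
    (hρ : ∀ x ∈ Ω, DifferentiableAt ℝ ρ x) (hρs : ∀ x ∈ Ω, DifferentiableAt ℝ ρs x)
    (hρpos : ∀ x ∈ Ω, 0 < ρ x) (hρspos : ∀ x ∈ Ω, 0 < ρs x)
    (hn1 : ∀ x ∈ Ω, DifferentiableAt ℝ n1 x) (hn2 : ∀ x ∈ Ω, DifferentiableAt ℝ n2 x)
    (hn3 : ∀ x ∈ Ω, DifferentiableAt ℝ n3 x)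
    (hn1s : ∀ x ∈ Ω, DifferentiableAt ℝ n1s x) (hn2s : ∀ x ∈ Ω, DifferentiableAt ℝ n2s x)
    (hn3s : ∀ x ∈ Ω, DifferentiableAt ℝ n3s x)
    (hunit : ∀ x ∈ Ω, (n1 x)^2 + (n2 x)^2 + (n3 x)^2 = 1)
    (hunits : ∀ x ∈ Ω, (n1s x)^2 + (n2s x)^2 + (n3s x)^2 = 1)
    (hn3neg : ∀ x ∈ Ω, n3 x < 0) (hn3sneg : ∀ x ∈ Ω, n3s x < 0)
    (m mstar : Fin 4 → ℝ × ℝ → ℝ)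
    (hm : m = ![ρ, fun x => ρ x * n1 x, fun x => ρ x * n2 x, fun x => ρ x * n3 x])
    (hms : mstar = ![ρs, fun x => ρs x * n1s x, fun x => ρs x * n2s x,
      fun x => ρs x * n3s x])
    (A : Matrix (Fin 4) (Fin 4) ℝ) (hA : IsScaledLorentz A)
    (hrel : ∀ x ∈ Ω, ∀ i : Fin 4, mstar i x = ∑ j : Fin 4, A i j * m j x)
    (hint : ∀ x ∈ Ω,
      pv (fun y => n1 y / n3 y) x = pu (fun y => n2 y / n3 y) x)
    (hints : ∀ x ∈ Ω,
      pv (fun y => n1s y / n3s y) x = pu (fun y => n2s y / n3s y) x)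
    (hnondeg : LinearIndependent ℝ
      (fun (k : Fin 11) (x : Ω) =>
        (![cmin pu m 0 1, cmin pu m 0 2, cmin pu m 0 3,
           cmin pu m 1 2, cmin pu m 1 3, cmin pu m 2 3,
           cmin pv m 0 1, cmin pv m 0 2, cmin pv m 0 3,
           cmin pv m 1 2, cmin pv m 2 3] k) (x : ℝ × ℝ))) :
    ∃ α : ℝ, 0 < α ∧ ∃ l : ℝ, (l = 1 ∨ l = -1) ∧
      A = α • Matrix.diagonal ![1, l, l, 1] :=
  orthographic_uniqueness_general Ω hΩ ρ ρs n1 n2 n3 n1s n2s n3s hρ hρs hρpos hρspos hn1 hn2 hn3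
    hn1s hn2s hn3s hn3neg hn3sneg m mstar hm hms A hA hrel hint hints hnondeg
end

section
/- Let Ω ⊆ ℝ² be an open set with coordinates (u,v) and f > 0. Let ρ : Ω → ℝ be a positive differentiable function and n = (n₁,n₂,n₃) : Ω → ℝ³ a differentiable map with |n| = 1 and n₃ nonvanishing, and set m = ρ·n = (m₁,m₂,m₃). Define p = −n₁/n₃ and q = −n₂/n₃, assume f − u·p − v·q ≠ 0 on Ω, and set p̂ = p/(f − up − vq), q̂ = q/(f − up − vq). Then ∂_v p̂ = ∂_u q̂ on Ω if and only if u·(m₁·∂_u m₂ − m₂·∂_u m₁) + v·(m₁·∂_v m₂ − m₂·∂_v m₁) + f·(m₁·∂_v m₃ − m₃·∂_v m₁) + f·(m₃·∂_u m₂ − m₂·∂_u m₃) = 0 on Ω. -/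
/-!
Where `n₃ ≠ 0` one has `p̂ = -n₁ / S` and `q̂ = -n₂ / S` with `S = f n₃ + u n₁ + v n₂`, so
`∂_v p̂ - ∂_u q̂ = E(n) / S²`, where `E(m)` is the left-hand side of the claimed identity.
Each term of `E` is a Wronskian `mᵢ ∂mⱼ - mⱼ ∂mᵢ`, hence `E(ρ n) = ρ² E(n)`, and `ρ S ≠ 0`.
-/

open scoped Topology

section Wronskian

variable {E : Type*} [NormedAddCommGroup E] [NormedSpace ℝ E] {g h ρ : E → ℝ} {x : E}

theorem fderiv_fun_mul_apply (hg : DifferentiableAt ℝ g x) (hh : DifferentiableAt ℝ h x)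
    (w : E) :
    fderiv ℝ (fun y => g y * h y) x w = g x * fderiv ℝ h x w + h x * fderiv ℝ g x w := by
  simp [fderiv_fun_mul hg hh]

theorem fderiv_fun_div_apply (hg : DifferentiableAt ℝ g x) (hh : DifferentiableAt ℝ h x)
    (hx : h x ≠ 0) (w : E) :
    fderiv ℝ (fun y => g y / h y) x w
      = (fderiv ℝ g x w * h x - g x * fderiv ℝ h x w) / h x ^ 2 := by
  have hinv : HasFDerivAt (fun y => (h y)⁻¹) _ x := (hasFDerivAt_inv hx).comp x hh.hasFDerivAt
  simp only [div_eq_mul_inv (g _)]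
  rw [(hg.hasFDerivAt.fun_mul hinv).fderiv]
  simp only [add_apply, smul_apply, ContinuousLinearMap.comp_apply,
    ContinuousLinearMap.toSpanSingleton_apply, smul_eq_mul]
  field_simp
  ring

noncomputable def fderivWronskian (g h : E → ℝ) (x w : E) : ℝ :=
  g x * fderiv ℝ h x w - h x * fderiv ℝ g x w

theorem fderivWronskian_mul_left (hρ : DifferentiableAt ℝ ρ x) (hg : DifferentiableAt ℝ g x)
    (hh : DifferentiableAt ℝ h x) (w : E) :
    fderivWronskian (fun y => ρ y * g y) (fun y => ρ y * h y) x w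
      = ρ x ^ 2 * fderivWronskian g h x w := by
  rw [fderivWronskian, fderivWronskian, fderiv_fun_mul_apply hρ hg, fderiv_fun_mul_apply hρ hh]
  ring

end Wronskian

noncomputable def integrabilityForm (f : ℝ) (m1 m2 m3 : ℝ × ℝ → ℝ) (x : ℝ × ℝ) : ℝ :=
  x.1 * fderivWronskian m1 m2 x (1, 0) + x.2 * fderivWronskian m1 m2 x (0, 1)
    + f * fderivWronskian m1 m3 x (0, 1) + f * fderivWronskian m3 m2 x (1, 0)

theorem integrabilityForm_mul_left {f : ℝ} {ρ n1 n2 n3 : ℝ × ℝ → ℝ} {x : ℝ × ℝ}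
    (hρ : DifferentiableAt ℝ ρ x) (h1 : DifferentiableAt ℝ n1 x)
    (h2 : DifferentiableAt ℝ n2 x) (h3 : DifferentiableAt ℝ n3 x) :
    integrabilityForm f (fun y => ρ y * n1 y) (fun y => ρ y * n2 y) (fun y => ρ y * n3 y) x
      = ρ x ^ 2 * integrabilityForm f n1 n2 n3 x := by
  simp only [integrabilityForm, fderivWronskian_mul_left hρ h1 h2,
    fderivWronskian_mul_left hρ h1 h3, fderivWronskian_mul_left hρ h3 h2]
  ring

section Perspective

variable {f : ℝ} {g n1 n2 n3 : ℝ × ℝ → ℝ} {x y : ℝ × ℝ}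

def perspectiveDenom (f : ℝ) (n1 n2 n3 : ℝ × ℝ → ℝ) (y : ℝ × ℝ) : ℝ :=
  f * n3 y + y.1 * n1 y + y.2 * n2 y

/-- `p̂` for `g = n₁` and `q̂` for `g = n₂`. -/
noncomputable def perspectiveSlope (f : ℝ) (g n1 n2 n3 : ℝ × ℝ → ℝ) (y : ℝ × ℝ) : ℝ :=
  (-(g y) / n3 y) / (f - y.1 * (-(n1 y) / n3 y) - y.2 * (-(n2 y) / n3 y))

theorem sub_mul_sub_mul_eq_perspectiveDenom_div (hy : n3 y ≠ 0) :
    f - y.1 * (-(n1 y) / n3 y) - y.2 * (-(n2 y) / n3 y)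
      = perspectiveDenom f n1 n2 n3 y / n3 y := by
  rw [perspectiveDenom]
  field_simp
  ring

theorem perspectiveSlope_eq_neg_div (hy : n3 y ≠ 0) :
    perspectiveSlope f g n1 n2 n3 y = -g y / perspectiveDenom f n1 n2 n3 y := by
  rw [perspectiveSlope, sub_mul_sub_mul_eq_perspectiveDenom_div hy,
    div_div_div_cancel_right₀ hy]

theorem fderiv_perspectiveDenom_apply (h1 : DifferentiableAt ℝ n1 x)
    (h2 : DifferentiableAt ℝ n2 x) (h3 : DifferentiableAt ℝ n3 x) (w : ℝ × ℝ) :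
    fderiv ℝ (perspectiveDenom f n1 n2 n3) x w
      = f * fderiv ℝ n3 x w + (w.1 * n1 x + x.1 * fderiv ℝ n1 x w)
        + (w.2 * n2 x + x.2 * fderiv ℝ n2 x w) := by
  have hS := ((h3.hasFDerivAt.const_mul f).fun_add
    (hasFDerivAt_fst.fun_mul h1.hasFDerivAt)).fun_add (hasFDerivAt_snd.fun_mul h2.hasFDerivAt)
  unfold perspectiveDenom
  rw [hS.fderiv]
  simp only [add_apply, smul_apply, smul_eq_mul, ContinuousLinearMap.coe_fst',
    ContinuousLinearMap.coe_snd']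
  ring

theorem perspectiveDenom_ne_zero (hy : n3 y ≠ 0)
    (hden : f - y.1 * (-(n1 y) / n3 y) - y.2 * (-(n2 y) / n3 y) ≠ 0) :
    perspectiveDenom f n1 n2 n3 y ≠ 0 := by
  rw [sub_mul_sub_mul_eq_perspectiveDenom_div hy] at hden
  exact (div_ne_zero_iff.mp hden).1

theorem pv_perspectiveSlope_sub_pu_perspectiveSlope (h1 : DifferentiableAt ℝ n1 x)
    (h2 : DifferentiableAt ℝ n2 x) (h3 : DifferentiableAt ℝ n3 x) (hx : n3 x ≠ 0)
    (hS : perspectiveDenom f n1 n2 n3 x ≠ 0) :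
    pv (perspectiveSlope f n1 n1 n2 n3) x - pu (perspectiveSlope f n2 n1 n2 n3) x
      = integrabilityForm f n1 n2 n3 x / perspectiveDenom f n1 n2 n3 x ^ 2 := by
  have hlocal (g : ℝ × ℝ → ℝ) :
      perspectiveSlope f g n1 n2 n3 =ᶠ[𝓝 x] fun y => -g y / perspectiveDenom f n1 n2 n3 y :=
    (h3.continuousAt.eventually_ne hx).mono fun y hy => perspectiveSlope_eq_neg_div hy
  have hSdiff : DifferentiableAt ℝ (perspectiveDenom f n1 n2 n3) x := by
    unfold perspectiveDenom; fun_prop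
  rw [pu, pv, (hlocal n1).fderiv_eq, (hlocal n2).fderiv_eq,
    fderiv_fun_div_apply h1.fun_neg hSdiff hS, fderiv_fun_div_apply h2.fun_neg hSdiff hS,
    fderiv_perspectiveDenom_apply h1 h2 h3, fderiv_perspectiveDenom_apply h1 h2 h3]
  simp only [fderiv_fun_neg, neg_apply, integrabilityForm, fderivWronskian,
    perspectiveDenom]
  field_simp
  ring

theorem pv_perspectiveSlope_eq_pu_perspectiveSlope_iff {ρ : ℝ × ℝ → ℝ}
    (hρ : DifferentiableAt ℝ ρ x) (hρx : ρ x ≠ 0) (h1 : DifferentiableAt ℝ n1 x)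
    (h2 : DifferentiableAt ℝ n2 x) (h3 : DifferentiableAt ℝ n3 x) (hx : n3 x ≠ 0)
    (hden : f - x.1 * (-(n1 x) / n3 x) - x.2 * (-(n2 x) / n3 x) ≠ 0) :
    pv (perspectiveSlope f n1 n1 n2 n3) x = pu (perspectiveSlope f n2 n1 n2 n3) x ↔
      integrabilityForm f (fun y => ρ y * n1 y) (fun y => ρ y * n2 y) (fun y => ρ y * n3 y) x
        = 0 := by
  rw [← sub_eq_zero, pv_perspectiveSlope_sub_pu_perspectiveSlope h1 h2 h3 hx
    (perspectiveDenom_ne_zero hx hden), integrabilityForm_mul_left hρ h1 h2 h3]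
  simp [hρx, perspectiveDenom_ne_zero hx hden]

end Perspective

theorem perspective_integrability_in_terms_of_m_general
    (Ω : Set (ℝ × ℝ)) (f : ℝ)
    (ρ n1 n2 n3 : ℝ × ℝ → ℝ)
    (hρ : ∀ x ∈ Ω, DifferentiableAt ℝ ρ x) (hρpos : ∀ x ∈ Ω, 0 < ρ x)
    (hn1 : ∀ x ∈ Ω, DifferentiableAt ℝ n1 x) (hn2 : ∀ x ∈ Ω, DifferentiableAt ℝ n2 x)
    (hn3 : ∀ x ∈ Ω, DifferentiableAt ℝ n3 x)
    (hn3ne : ∀ x ∈ Ω, n3 x ≠ 0)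
    (hden : ∀ x ∈ Ω, f - x.1 * (-(n1 x) / n3 x) - x.2 * (-(n2 x) / n3 x) ≠ 0) :
    letI p : ℝ × ℝ → ℝ := fun y => -(n1 y) / n3 y
    letI q : ℝ × ℝ → ℝ := fun y => -(n2 y) / n3 y
    letI m1 : ℝ × ℝ → ℝ := fun y => ρ y * n1 y
    letI m2 : ℝ × ℝ → ℝ := fun y => ρ y * n2 y
    letI m3 : ℝ × ℝ → ℝ := fun y => ρ y * n3 y
    ((∀ x ∈ Ω,
        pv (fun y => p y / (f - y.1 * p y - y.2 * q y)) x
          = pu (fun y => q y / (f - y.1 * p y - y.2 * q y)) x) ↔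
      (∀ x ∈ Ω,
        x.1 * (m1 x * pu m2 x - m2 x * pu m1 x)
          + x.2 * (m1 x * pv m2 x - m2 x * pv m1 x)
          + f * (m1 x * pv m3 x - m3 x * pv m1 x)
          + f * (m3 x * pu m2 x - m2 x * pu m3 x) = 0)) :=
  forall₂_congr fun x hx => pv_perspectiveSlope_eq_pu_perspectiveSlope_iff (hρ x hx)
    (hρpos x hx).ne' (hn1 x hx) (hn2 x hx) (hn3 x hx) (hn3ne x hx) (hden x hx)

/-- Perspective integrability of a normal field n, expressed in terms of the
components of m = ρ·n: with p = −n₁/n₃, q = −n₂/n₃, p̂ = p/(f−up−vq),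
q̂ = q/(f−up−vq), one has ∂_v p̂ = ∂_u q̂ on Ω iff
u·(m₁ ∂_u m₂ − m₂ ∂_u m₁) + v·(m₁ ∂_v m₂ − m₂ ∂_v m₁)
+ f·(m₁ ∂_v m₃ − m₃ ∂_v m₁) + f·(m₃ ∂_u m₂ − m₂ ∂_u m₃) = 0 on Ω. -/
theorem perspective_integrability_in_terms_of_m
    (Ω : Set (ℝ × ℝ)) (hΩ : IsOpen Ω) (f : ℝ) (hf : 0 < f)
    (ρ n1 n2 n3 : ℝ × ℝ → ℝ)
    (hρ : ∀ x ∈ Ω, DifferentiableAt ℝ ρ x) (hρpos : ∀ x ∈ Ω, 0 < ρ x)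
    (hn1 : ∀ x ∈ Ω, DifferentiableAt ℝ n1 x) (hn2 : ∀ x ∈ Ω, DifferentiableAt ℝ n2 x)
    (hn3 : ∀ x ∈ Ω, DifferentiableAt ℝ n3 x)
    (hunit : ∀ x ∈ Ω, (n1 x)^2 + (n2 x)^2 + (n3 x)^2 = 1)
    (hn3ne : ∀ x ∈ Ω, n3 x ≠ 0)
    (hden : ∀ x ∈ Ω, f - x.1 * (-(n1 x) / n3 x) - x.2 * (-(n2 x) / n3 x) ≠ 0) :
    letI p : ℝ × ℝ → ℝ := fun y => -(n1 y) / n3 y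
    letI q : ℝ × ℝ → ℝ := fun y => -(n2 y) / n3 y
    letI m1 : ℝ × ℝ → ℝ := fun y => ρ y * n1 y
    letI m2 : ℝ × ℝ → ℝ := fun y => ρ y * n2 y
    letI m3 : ℝ × ℝ → ℝ := fun y => ρ y * n3 y
    ((∀ x ∈ Ω,
        pv (fun y => p y / (f - y.1 * p y - y.2 * q y)) x
          = pu (fun y => q y / (f - y.1 * p y - y.2 * q y)) x) ↔
      (∀ x ∈ Ω,
        x.1 * (m1 x * pu m2 x - m2 x * pu m1 x)
          + x.2 * (m1 x * pv m2 x - m2 x * pv m1 x)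
          + f * (m1 x * pv m3 x - m3 x * pv m1 x)
          + f * (m3 x * pu m2 x - m2 x * pu m3 x) = 0)) :=
  perspective_integrability_in_terms_of_m_general Ω f ρ n1 n2 n3 hρ hρpos hn1 hn2 hn3 hn3ne hden
end

section
/- A real 3×3 matrix A is a scaled GBR matrix (i.e. there exist s ≠ 0, λ ≠ 0 and μ, ν ∈ ℝ with A = s·[[λ,0,−μ],[0,λ,−ν],[0,0,1]]) if and only if A is invertible and its entries satisfy A^{2,1}_{3,2} = A^{2,1}_{3,3} = A^{1,2}_{3,3} = A^{1,1}_{3,2} = 0 and A^{2,2}_{3,3} = A^{1,1}_{3,3}, where A^{i,j}_{k,l} = A_{ij}·A_{kl} − A_{kj}·A_{il}. -/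
/-- The GBR (generalized bas-relief) matrix with parameters (λ, μ, ν). -/
def GBR (l m n : ℝ) : Matrix (Fin 3) (Fin 3) ℝ :=
  !![l, 0, -m; 0, l, -n; 0, 0, 1]

/-- The 2×2 minor C^{i,j}_{k,l} = C_{ij}·C_{kl} − C_{kj}·C_{il} (indices 0-based here). -/
def minor3 (C : Matrix (Fin 3) (Fin 3) ℝ) (i j k l : Fin 3) : ℝ :=
  C i j * C k l - C k j * C i l

/-!
The five minors in the statement are, up to sign, entries of the adjugate: the conditions say
exactly that `adj A` has the zero pattern and equal leading diagonal entries of a GBR matrix.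
This pattern is preserved by scaling and by taking adjugates, and `adj (adj A) = det A • A`, so
for invertible `A` it holds for `A` iff it holds for `adj A`. An invertible matrix with this
pattern is `A 2 2 • GBR (A 0 0 / A 2 2) (-A 0 2 / A 2 2) (-A 1 2 / A 2 2)`.
-/

open Matrix

def IsGBRPattern {R : Type*} [Zero R] (M : Matrix (Fin 3) (Fin 3) R) : Prop :=
  M 2 0 = 0 ∧ M 1 0 = 0 ∧ M 0 1 = 0 ∧ M 2 1 = 0 ∧ M 0 0 = M 1 1

namespace IsGBRPattern

variable {R : Type*} [CommRing R] {M : Matrix (Fin 3) (Fin 3) R}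

theorem smul (c : R) (hM : IsGBRPattern M) : IsGBRPattern (c • M) := by
  obtain ⟨h20, h10, h01, h21, h00⟩ := hM
  simp [IsGBRPattern, h20, h10, h01, h21, h00]

theorem adjugate (hM : IsGBRPattern M) : IsGBRPattern M.adjugate := by
  obtain ⟨h20, h10, h01, h21, h00⟩ := hM
  simp [IsGBRPattern, adjugate_fin_three, h20, h10, h01, h21, h00]

theorem det_eq (hM : IsGBRPattern M) : M.det = M 0 0 ^ 2 * M 2 2 := by
  obtain ⟨h20, h10, h01, h21, h00⟩ := hM
  rw [det_fin_three, h20, h10, h01, h21, ← h00]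
  ring

theorem of_smul {K : Type*} [Field K] {M : Matrix (Fin 3) (Fin 3) K} {c : K} (hc : c ≠ 0)
    (hM : IsGBRPattern (c • M)) : IsGBRPattern M := by
  simpa [inv_smul_smul₀ hc] using hM.smul c⁻¹

theorem of_adjugate {K : Type*} [Field K] {A : Matrix (Fin 3) (Fin 3) K}
    (hA : A.det ≠ 0) (h : IsGBRPattern A.adjugate) : IsGBRPattern A := by
  have h' := h.adjugate
  rw [adjugate_adjugate A (by simp), Fintype.card_fin, pow_one] at h'
  exact h'.of_smul hA

end IsGBRPattern

theorem isGBRPattern_adjugate_iff (A : Matrix (Fin 3) (Fin 3) ℝ) :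
    IsGBRPattern A.adjugate ↔
      minor3 A 1 0 2 1 = 0 ∧ minor3 A 1 0 2 2 = 0 ∧
      minor3 A 0 1 2 2 = 0 ∧ minor3 A 0 0 2 1 = 0 ∧
      minor3 A 1 1 2 2 = minor3 A 0 0 2 2 := by
  simp only [IsGBRPattern, adjugate_fin_three, minor3, of_apply, cons_val', cons_val_zero,
    cons_val_one, cons_val_two, vecHead, tail_cons, empty_val', cons_val_fin_one]
  constructor <;> rintro ⟨h20, h10, h01, h21, h00⟩ <;>
    exact ⟨by linear_combination h20, by linear_combination -h10, by linear_combination -h01,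
      by linear_combination -h21, by linear_combination h00⟩

theorem det_GBR (l m n : ℝ) : (GBR l m n).det = l ^ 2 := by
  simp [GBR, det_fin_three, sq]

theorem isGBRPattern_GBR (l m n : ℝ) : IsGBRPattern (GBR l m n) := by
  simp [IsGBRPattern, GBR]

theorem exists_smul_GBR_iff (A : Matrix (Fin 3) (Fin 3) ℝ) :
    (∃ s l m n : ℝ, s ≠ 0 ∧ l ≠ 0 ∧ A = s • GBR l m n) ↔ A.det ≠ 0 ∧ IsGBRPattern A := by
  constructor
  · rintro ⟨s, l, m, n, hs, hl, rfl⟩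
    refine ⟨?_, (isGBRPattern_GBR l m n).smul s⟩
    rw [det_smul, det_GBR, Fintype.card_fin]
    positivity
  · rintro ⟨hA, hP⟩
    have h00 : A 0 0 ≠ 0 := fun h ↦ hA (by simp [hP.det_eq, h])
    have h22 : A 2 2 ≠ 0 := fun h ↦ hA (by simp [hP.det_eq, h])
    obtain ⟨h20, h10, h01, h21, h11⟩ := hP
    refine ⟨A 2 2, A 0 0 / A 2 2, -A 0 2 / A 2 2, -A 1 2 / A 2 2, h22, div_ne_zero h00 h22, ?_⟩
    ext i j
    fin_cases i <;> fin_cases j <;>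
      simp [GBR, h20, h10, h01, h21, h11, mul_div_cancel₀ _ h22]

/-- A 3×3 matrix is a scaled GBR matrix iff it is invertible and satisfies
A^{2,1}_{3,2} = A^{2,1}_{3,3} = A^{1,2}_{3,3} = A^{1,1}_{3,2} = 0 and
A^{2,2}_{3,3} = A^{1,1}_{3,3} (1-based index notation). -/
theorem scaled_GBR_characterization (A : Matrix (Fin 3) (Fin 3) ℝ) :
    (∃ s l m n : ℝ, s ≠ 0 ∧ l ≠ 0 ∧ A = s • GBR l m n) ↔
    (IsUnit A.det ∧
      minor3 A 1 0 2 1 = 0 ∧ minor3 A 1 0 2 2 = 0 ∧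
      minor3 A 0 1 2 2 = 0 ∧ minor3 A 0 0 2 1 = 0 ∧
      minor3 A 1 1 2 2 = minor3 A 0 0 2 2) := by
  rw [exists_smul_GBR_iff, isUnit_iff_ne_zero, ← isGBRPattern_adjugate_iff]
  exact and_congr_right fun hA ↦ ⟨IsGBRPattern.adjugate, IsGBRPattern.of_adjugate hA⟩
end

section
/- Let A be a scaled Lorentz transformation (a real 4×4 matrix). Then the 3×3 submatrix of A formed by its last three rows and last three columns is invertible. -/
open Matrix

/-!
If the spatial block of a Lorentz transformation `B` killed a vector `v ≠ 0`, then the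
spacelike vector `x = (0, v)` would be sent to a vector with zero spatial part, which is
timelike or null: `0 < q(x) = q(Bx) ≤ 0`. Scaling by `s ≠ 0` multiplies the block's
determinant by `s³`.
-/

theorem Matrix.tail_mulVec_cons_zero {R : Type*} [NonUnitalNonAssocSemiring R] {n : ℕ}
    (B : Matrix (Fin (n + 1)) (Fin (n + 1)) R) (v : Fin n → R) :
    Fin.tail (B *ᵥ Fin.cons 0 v) = B.submatrix Fin.succ Fin.succ *ᵥ v := by
  ext i
  simp [Fin.tail, mulVec, dotProduct, Fin.sum_univ_succ]

theorem mink_eq_dotProduct_tail_sub (x : Fin 4 → ℝ) :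
    mink x = Fin.tail x ⬝ᵥ Fin.tail x - x 0 ^ 2 := by
  simp [mink, dotProduct, Fin.sum_univ_three, Fin.tail, sq]

theorem IsLorentz.det_submatrix_succ_ne_zero {B : Matrix (Fin 4) (Fin 4) ℝ} (hB : IsLorentz B) :
    (B.submatrix Fin.succ Fin.succ).det ≠ 0 := by
  intro hdet
  obtain ⟨v, hv, hBv⟩ := exists_mulVec_eq_zero_iff.mpr hdet
  have hspacelike : mink (Fin.cons 0 v) = v ⬝ᵥ v := by
    simp [mink_eq_dotProduct_tail_sub]
  have hnonspacelike : mink (B *ᵥ Fin.cons 0 v) ≤ 0 := by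
    rw [mink_eq_dotProduct_tail_sub, tail_mulVec_cons_zero, hBv, dotProduct_zero]
    linarith [sq_nonneg ((B *ᵥ Fin.cons 0 v) 0)]
  rw [hB, hspacelike] at hnonspacelike
  exact hv (dotProduct_self_eq_zero.mp (le_antisymm hnonspacelike (dotProduct_self_star_nonneg v)))

/-- The 3×3 submatrix of a scaled Lorentz transformation formed by its last three
rows and last three columns is invertible. -/
theorem scaled_lorentz_lower_block_invertible (A : Matrix (Fin 4) (Fin 4) ℝ)
    (hA : IsScaledLorentz A) :
    IsUnit (A.submatrix (Fin.succ : Fin 3 → Fin 4) (Fin.succ : Fin 3 → Fin 4)).det := by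
  obtain ⟨s, hs, B, hB, rfl⟩ := hA
  rw [submatrix_smul, Pi.smul_apply, Pi.smul_apply, det_smul, isUnit_iff_ne_zero]
  exact mul_ne_zero (pow_ne_zero _ hs) hB.det_submatrix_succ_ne_zero
end

section
/- Let A be a scaled Lorentz transformation (a real 4×4 matrix) whose entries satisfy A^{3,2}_{4,3} = A^{3,2}_{4,4} = A^{2,3}_{4,4} = A^{2,2}_{4,3} = 0 and A^{3,3}_{4,4} = A^{2,2}_{4,4}, where A^{i,j}_{k,l} = A_{ij}·A_{kl} − A_{kj}·A_{il}. Then there exists a unique quadruple (λ, μ, ν, β) ∈ ℝ⁴ with λ ≠ 0 and β ≠ 0 such that the 3×3 submatrix of A formed by its last three rows and last three columns equals β·[[λ,0,−μ],[0,λ,−ν],[0,0,1]]. -/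
/-- The 2×2 minor A^{i,j}_{k,l} = A_{ij}·A_{kl} − A_{kj}·A_{il} (indices 0-based here). -/
def minor4 (A : Matrix (Fin 4) (Fin 4) ℝ) (i j k l : Fin 4) : ℝ :=
  A i j * A k l - A k j * A i l

/-- If a scaled Lorentz transformation satisfies
A^{3,2}_{4,3} = A^{3,2}_{4,4} = A^{2,3}_{4,4} = A^{2,2}_{4,3} = 0 and
A^{3,3}_{4,4} = A^{2,2}_{4,4} (1-based index notation), then the submatrix formed
by its last three rows and columns is a scaled GBR matrix, with unique parameters. -/
theorem scaled_lorentz_lower_block_is_scaled_GBR (A : Matrix (Fin 4) (Fin 4) ℝ)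
    (hA : IsScaledLorentz A)
    (h1 : minor4 A 2 1 3 2 = 0) (h2 : minor4 A 2 1 3 3 = 0)
    (h3 : minor4 A 1 2 3 3 = 0) (h4 : minor4 A 1 1 3 2 = 0)
    (h5 : minor4 A 2 2 3 3 = minor4 A 1 1 3 3) :
    ∃! p : ℝ × ℝ × ℝ × ℝ,
      p.1 ≠ 0 ∧ p.2.2.2 ≠ 0 ∧
      A.submatrix (Fin.succ : Fin 3 → Fin 4) (Fin.succ : Fin 3 → Fin 4)
        = p.2.2.2 • GBR p.1 p.2.1 p.2.2.1 := by
  obtain ⟨s, hs, B, hB, hAB⟩ := hA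
  unfold minor4 at h1 h2 h3 h4 h5
  set M : Matrix (Fin 3) (Fin 3) ℝ :=
    A.submatrix (Fin.succ : Fin 3 → Fin 4) (Fin.succ : Fin 3 → Fin 4) with hM
  -- Step 1: det M ≠ 0
  have hdet : M.det ≠ 0 := by
    intro hd
    obtain ⟨x, hx, hMx⟩ := Matrix.exists_mulVec_eq_zero_iff.mpr hd
    set X : Fin 4 → ℝ := ![0, x 0, x 1, x 2] with hX
    have hsm : ∀ y : Fin 4 → ℝ, mink (s • y) = s^2 * mink y := by
      intro y; simp only [mink, Pi.smul_apply, smul_eq_mul]; ring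
    have hq : mink (A.mulVec X) = s^2 * mink X := by
      rw [hAB, Matrix.smul_mulVec, hsm, hB X]
    have c0 := congrFun hMx 0
    have c1 := congrFun hMx 1
    have c2 := congrFun hMx 2
    simp only [Matrix.mulVec, dotProduct, Fin.sum_univ_three, hM,
      Matrix.submatrix_apply, Pi.zero_apply] at c0 c1 c2
    have s00 : (Fin.succ (0:Fin 3) : Fin 4) = 1 := rfl
    have s11 : (Fin.succ (1:Fin 3) : Fin 4) = 2 := rfl
    have s22 : (Fin.succ (2:Fin 3) : Fin 4) = 3 := rfl
    simp only [s00, s11, s22] at c0 c1 c2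
    have e1 : (A.mulVec X) 1 = 0 := by
      simp only [Matrix.mulVec, dotProduct, Fin.sum_univ_four, hX]
      simp only [Matrix.cons_val_zero, Matrix.cons_val_one, Matrix.head_cons,
        Matrix.cons_val_two, Matrix.tail_cons, Matrix.cons_val_three]
      linear_combination c0
    have e2 : (A.mulVec X) 2 = 0 := by
      simp only [Matrix.mulVec, dotProduct, Fin.sum_univ_four, hX]
      simp only [Matrix.cons_val_zero, Matrix.cons_val_one, Matrix.head_cons,
        Matrix.cons_val_two, Matrix.tail_cons, Matrix.cons_val_three]
      linear_combination c1
    have e3 : (A.mulVec X) 3 = 0 := by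
      simp only [Matrix.mulVec, dotProduct, Fin.sum_univ_four, hX]
      simp only [Matrix.cons_val_zero, Matrix.cons_val_one, Matrix.head_cons,
        Matrix.cons_val_two, Matrix.tail_cons, Matrix.cons_val_three]
      linear_combination c2
    have hpos : mink X > 0 := by
      have hx' : x 0 ≠ 0 ∨ x 1 ≠ 0 ∨ x 2 ≠ 0 := by
        by_contra hcon
        push_neg at hcon
        apply hx
        funext i
        fin_cases i <;> simp [hcon.1, hcon.2.1, hcon.2.2]
      simp only [mink, hX]
      simp only [Matrix.cons_val_zero, Matrix.cons_val_one, Matrix.head_cons,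
        Matrix.cons_val_two, Matrix.tail_cons, Matrix.cons_val_three]
      have h00 : (0:ℝ)^2 = 0 := by norm_num
      rw [h00, sub_zero]
      rcases hx' with h | h | h <;> positivity
    have hneg : mink (A.mulVec X) ≤ 0 := by
      simp only [mink, e1, e2, e3]
      nlinarith [sq_nonneg ((A.mulVec X) 0)]
    nlinarith [sq_abs s, hpos, hneg, sq_nonneg s, mul_pos (mul_pos (abs_pos.mpr hs) (abs_pos.mpr hs)) hpos]
  rw [Matrix.det_fin_three] at hdet
  have m00 : M 0 0 = A 1 1 := rfl
  have m01 : M 0 1 = A 1 2 := rfl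
  have m02 : M 0 2 = A 1 3 := rfl
  have m10 : M 1 0 = A 2 1 := rfl
  have m11 : M 1 1 = A 2 2 := rfl
  have m12 : M 1 2 = A 2 3 := rfl
  have m20 : M 2 0 = A 3 1 := rfl
  have m21 : M 2 1 = A 3 2 := rfl
  have m22 : M 2 2 = A 3 3 := rfl
  rw [m00, m01, m02, m10, m11, m12, m20, m21, m22] at hdet
  set D : ℝ := A 1 1 * A 2 2 * A 3 3 - A 1 1 * A 2 3 * A 3 2 - A 1 2 * A 2 1 * A 3 3
      + A 1 2 * A 2 3 * A 3 1 + A 1 3 * A 2 1 * A 3 2 - A 1 3 * A 2 2 * A 3 1 with hD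
  set al : ℝ := A 2 2 * A 3 3 - A 3 2 * A 2 3 with hal
  -- Step 2: al² * γ = D², hence al ≠ 0
  have key : al^2 * (A 1 1 * A 2 2 - A 2 1 * A 1 2) = D^2 := by
    rw [hal, hD]
    linear_combination
      (al * (A 1 1 * A 2 2 - A 2 1 * A 1 2)
        - (A 1 2 * A 2 3 - A 2 2 * A 1 3) * (A 2 1 * A 3 2 - A 3 1 * A 2 2)) * h5
      + (al * (A 1 2 * A 2 3 - A 2 2 * A 1 3)
        + (-(A 1 1 * A 2 3 - A 2 1 * A 1 3)) * (A 1 2 * A 3 3 - A 3 2 * A 1 3)) * h1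
      + ((A 1 1 * A 2 2 - A 2 1 * A 1 2) * (A 1 2 * A 3 3 - A 3 2 * A 1 3)
        - (A 1 2 * A 2 3 - A 2 2 * A 1 3) * (A 1 1 * A 3 2 - A 3 1 * A 1 2)) * h2
      + (- al * (-(A 1 1 * A 2 3 - A 2 1 * A 1 3))) * h4
  have halne : al ≠ 0 := by
    intro h0
    rw [h0] at key
    apply hdet
    have h' : D ^ 2 = 0 := by rw [← key]; ring
    exact (pow_eq_zero_iff (two_ne_zero)).mp h'
  -- Step 3: zero entries
  have h31 : A 3 1 = 0 := by
    have : A 3 1 * al = 0 := by rw [hal]; linear_combination (A 3 2) * h2 - (A 3 3) * h1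
    exact (mul_eq_zero.mp this).resolve_right halne
  have h32 : A 3 2 = 0 := by
    have : A 3 2 * al = 0 := by
      rw [hal]; linear_combination (A 3 2) * h5 + (A 3 1) * h3 + (A 3 3) * h4
    exact (mul_eq_zero.mp this).resolve_right halne
  have h21 : A 2 1 = 0 := by
    have : A 2 1 * al = 0 := by
      rw [hal]
      linear_combination (A 1 1) * h2 + (A 1 1 * A 2 3 - A 2 1 * A 1 3) * h31 + (A 2 1) * h5
    exact (mul_eq_zero.mp this).resolve_right halne
  have h12 : A 1 2 = 0 := by
    have : A 1 2 * al = 0 := by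
      rw [hal]
      linear_combination (A 2 2) * h3 - (A 1 2 * A 2 3 - A 2 2 * A 1 3) * h32
    exact (mul_eq_zero.mp this).resolve_right halne
  have hDfac : D = A 1 1 * A 2 2 * A 3 3 := by
    rw [hD]
    linear_combination (- A 2 1 * A 3 3 + A 2 3 * A 3 1) * h12
      + (- A 1 1 * A 2 3 + A 1 3 * A 2 1) * h32 + (- A 1 3 * A 2 2) * h31
  rw [hDfac] at hdet
  have h11 : A 1 1 ≠ 0 := fun h => hdet (by rw [h]; ring)
  have h22ne : A 2 2 ≠ 0 := fun h => hdet (by rw [h]; ring)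
  have h33 : A 3 3 ≠ 0 := fun h => hdet (by rw [h]; ring)
  have h2211 : A 2 2 = A 1 1 := by
    have : A 2 2 * A 3 3 = A 1 1 * A 3 3 := by
      linear_combination h5 + (A 2 3) * h32 - (A 1 3) * h31
    exact mul_right_cancel₀ h33 this
  -- the solution
  refine ⟨⟨A 1 1 / A 3 3, -(A 1 3) / A 3 3, -(A 2 3) / A 3 3, A 3 3⟩,
    ⟨div_ne_zero h11 h33, h33, ?_⟩, ?_⟩
  · refine Matrix.ext fun i j => ?_
    fin_cases i <;> fin_cases j
    · show A 1 1 = A 3 3 * (A 1 1 / A 3 3); field_simp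
    · show A 1 2 = A 3 3 * 0; rw [h12]; ring
    · show A 1 3 = A 3 3 * -(-(A 1 3) / A 3 3); field_simp
    · show A 2 1 = A 3 3 * 0; rw [h21]; ring
    · show A 2 2 = A 3 3 * (A 1 1 / A 3 3); rw [h2211]; field_simp
    · show A 2 3 = A 3 3 * -(-(A 2 3) / A 3 3); field_simp
    · show A 3 1 = A 3 3 * 0; rw [h31]; ring
    · show A 3 2 = A 3 3 * 0; rw [h32]; ring
    · show A 3 3 = A 3 3 * 1; ring
  · rintro ⟨l', m', n', b'⟩ ⟨hl', hb', heq⟩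
    have E22 : A 3 3 = b' * 1 := congrFun (congrFun heq 2) 2
    have E00 : A 1 1 = b' * l' := congrFun (congrFun heq 0) 0
    have E02 : A 1 3 = b' * (-m') := congrFun (congrFun heq 0) 2
    have E12 : A 2 3 = b' * (-n') := congrFun (congrFun heq 1) 2
    have hb : b' = A 3 3 := by rw [E22]; ring
    simp only [Prod.mk.injEq]
    refine ⟨?_, ?_, ?_, hb⟩
    · rw [E00, hb]; field_simp
    · have : m' = -(A 1 3) / b' := by rw [E02]; field_simp
      rw [this, hb]
    · have : n' = -(A 2 3) / b' := by rw [E12]; field_simp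
      rw [this, hb]
end

section
/- Let β and s be nonzero reals, λ ≠ 0, and μ, ν ∈ ℝ, and let G = [[λ,0,−μ],[0,λ,−ν],[0,0,1]]. If (βG)ᵀ·(βG) = s²·I₃, then λ² = 1, μ = 0, ν = 0, and β² = s². -/
/-- If β·G, with G a GBR matrix, satisfies (βG)ᵀ(βG) = s²·I₃ for nonzero s, then
λ² = 1, μ = ν = 0 and β² = s². -/
theorem GBR_orthogonality (b s l m n : ℝ) (hb : b ≠ 0) (hs : s ≠ 0) (hl : l ≠ 0)
    (h : (b • GBR l m n).transpose * (b • GBR l m n) = (s^2 : ℝ) • (1 : Matrix (Fin 3) (Fin 3) ℝ)) :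
    l^2 = 1 ∧ m = 0 ∧ n = 0 ∧ b^2 = s^2 := by
  have h00 := congrFun (congrFun h 0) 0
  have h02 := congrFun (congrFun h 0) 2
  have h12 := congrFun (congrFun h 1) 2
  have h22 := congrFun (congrFun h 2) 2
  simp [GBR, Matrix.mul_apply, Fin.sum_univ_succ, Matrix.one_apply] at h00 h02 h12 h22
  have hm : m = 0 := by tauto
  have hn : n = 0 := by tauto
  subst hm hn
  have hb2 : b^2 = s^2 := by nlinarith
  refine ⟨?_, rfl, rfl, hb2⟩
  have hb2' : b^2 ≠ 0 := pow_ne_zero 2 hb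
  have key : b^2 * l^2 = b^2 * 1 := by nlinarith
  exact mul_left_cancel₀ hb2' key
end

section
/- Let Ω ⊆ ℝ² be an open set with coordinates (u,v), let c = (c₁,c₂,c₃,c₄) : Ω → ℝ⁴ be differentiable, let A be a real 4×4 matrix, and set c* = A·c. Suppose c* satisfies the orthographic integrability identity (∂_v c₂* − ∂_u c₃*)·c₄* + c₃*·∂_u c₄* − c₂*·∂_v c₄* = 0 on Ω. Then at every point of Ω: c^{1,2}_v·A^{2,1}_{4,2} + c^{1,3}_v·A^{2,1}_{4,3} + c^{1,4}_v·A^{2,1}_{4,4} + c^{2,3}_v·A^{2,2}_{4,3} + c^{2,4}_v·A^{2,2}_{4,4} + c^{3,4}_v·A^{2,3}_{4,4} − c^{1,2}_u·A^{3,1}_{4,2} − c^{1,3}_u·A^{3,1}_{4,3} − c^{1,4}_u·A^{3,1}_{4,4} − c^{2,3}_u·A^{3,2}_{4,3} − c^{2,4}_u·A^{3,2}_{4,4} − c^{3,4}_u·A^{3,3}_{4,4} = 0. -/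
lemma pd_comb (w : ℝ × ℝ) (a : Fin 4 → ℝ) (c : Fin 4 → ℝ × ℝ → ℝ) (x : ℝ × ℝ)
    (hc : ∀ j, DifferentiableAt ℝ (c j) x) :
    fderiv ℝ (fun y => ∑ j : Fin 4, a j * c j y) x w
      = ∑ j : Fin 4, a j * fderiv ℝ (c j) x w := by
  have h : fderiv ℝ (fun y => ∑ j : Fin 4, a j * c j y) x
      = ∑ j : Fin 4, fderiv ℝ (fun y => a j * c j y) x := by
    exact fderiv_fun_sum (fun j _ => (hc j).const_mul (a j))
  rw [h, ContinuousLinearMap.sum_apply]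
  congr 1; funext j
  rw [fderiv_const_mul (hc j)]
  simp

/-- If c* = A·c satisfies the orthographic integrability identity, then the
corresponding bilinear identity in the minors of A and the quantities c^{i,j}_k holds. -/
theorem orthographic_integrability_minors (Ω : Set (ℝ × ℝ)) (hΩ : IsOpen Ω)
    (c : Fin 4 → ℝ × ℝ → ℝ) (hc : ∀ i, ∀ x ∈ Ω, DifferentiableAt ℝ (c i) x)
    (A : Matrix (Fin 4) (Fin 4) ℝ) (cstar : Fin 4 → ℝ × ℝ → ℝ)
    (hcs : ∀ i, cstar i = fun x => ∑ j : Fin 4, A i j * c j x)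
    (hint : ∀ x ∈ Ω,
      (pv (cstar 1) x - pu (cstar 2) x) * cstar 3 x
        + cstar 2 x * pu (cstar 3) x - cstar 1 x * pv (cstar 3) x = 0) :
    ∀ x ∈ Ω,
      cmin pv c 0 1 x * minor4 A 1 0 3 1
        + cmin pv c 0 2 x * minor4 A 1 0 3 2
        + cmin pv c 0 3 x * minor4 A 1 0 3 3
        + cmin pv c 1 2 x * minor4 A 1 1 3 2
        + cmin pv c 1 3 x * minor4 A 1 1 3 3
        + cmin pv c 2 3 x * minor4 A 1 2 3 3
        - cmin pu c 0 1 x * minor4 A 2 0 3 1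
        - cmin pu c 0 2 x * minor4 A 2 0 3 2
        - cmin pu c 0 3 x * minor4 A 2 0 3 3
        - cmin pu c 1 2 x * minor4 A 2 1 3 2
        - cmin pu c 1 3 x * minor4 A 2 1 3 3
        - cmin pu c 2 3 x * minor4 A 2 2 3 3 = 0 := by
  intro x hx
  have hd : ∀ j, DifferentiableAt ℝ (c j) x := fun j => hc j x hx
  have h := hint x hx
  have hv : ∀ i, pv (cstar i) x = ∑ j : Fin 4, A i j * pv (c j) x := by
    intro i; rw [hcs i]; exact pd_comb (0,1) (A i) c x hd
  have hu : ∀ i, pu (cstar i) x = ∑ j : Fin 4, A i j * pu (c j) x := by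
    intro i; rw [hcs i]; exact pd_comb (1,0) (A i) c x hd
  have hval : ∀ i, cstar i x = ∑ j : Fin 4, A i j * c j x := by
    intro i; rw [hcs i]
  rw [hv, hu, hu, hv, hval, hval, hval] at h
  simp only [Fin.sum_univ_four] at h
  simp only [cmin, minor4]
  linear_combination h
end
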